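/- arXiv:2105.11406 — 9 statements merged into one kernel-verified Lean document; each statement's English description precedes it below -/
import Mathlib

section
/- Suppose θ is a stable equilibrium of the Kuramoto network. Then ∑_{j=1}^{n}∑_{k=1}^{n} A j k · cos²(θ_k − θ_j) ≤ ∑_{j=1}^{n}∑_{k=1}^{n} A j k · cos(θ_k − θ_j). -/
/-- If `θ` is a stable equilibrium of the Kuramoto network (with self-loops), then
`∑_{j,k} A j k · cos²(θ_k − θ_j) ≤ ∑_{j,k} A j k · cos(θ_k − θ_j)`. -/
theorem stable_equilibrium_cos_sq_sum_le_cos_sum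
    (n : ℕ) (hn : 1 ≤ n) (A : Fin n → Fin n → ℝ) (θ : Fin n → ℝ)
    (hsym : ∀ j k, A j k = A k j)
    (h01 : ∀ j k, A j k = 0 ∨ A j k = 1)
    (hdiag : ∀ j, A j j = 1)
    (heq : ∀ j, ∑ k : Fin n, A j k * Real.sin (θ k - θ j) = 0)
    (hstab : ∀ v : Fin n → ℝ,
      0 ≤ ∑ j : Fin n, ∑ k : Fin n,
            A j k * Real.cos (θ k - θ j) * (v j - v k) ^ 2) :
    ∑ j : Fin n, ∑ k : Fin n, A j k * Real.cos (θ k - θ j) ^ 2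
      ≤ ∑ j : Fin n, ∑ k : Fin n, A j k * Real.cos (θ k - θ j) := by
  have h1 := hstab (fun j => Real.sin (θ j))
  have h2 := hstab (fun j => Real.cos (θ j))
  have key : 0 ≤ ∑ j : Fin n, ∑ k : Fin n,
      (A j k * Real.cos (θ k - θ j) * 2 - A j k * Real.cos (θ k - θ j) ^ 2 * 2) := by
    have h3 := add_nonneg h1 h2
    rw [← Finset.sum_add_distrib] at h3
    simp only [← Finset.sum_add_distrib] at h3
    convert h3 using 2 with j _
    · rfl
    apply Finset.sum_congr rfl
    intro k _
    have hc : Real.cos (θ k - θ j)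
        = Real.cos (θ k) * Real.cos (θ j) + Real.sin (θ k) * Real.sin (θ j) :=
      Real.cos_sub _ _
    have hk := Real.sin_sq_add_cos_sq (θ k)
    have hj := Real.sin_sq_add_cos_sq (θ j)
    rw [hc]
    linear_combination (-A j k * (Real.cos (θ k) * Real.cos (θ j) + Real.sin (θ k) * Real.sin (θ j))) * hk + (-A j k * (Real.cos (θ k) * Real.cos (θ j) + Real.sin (θ k) * Real.sin (θ j))) * hj
  rw [Finset.sum_comm] at key
  have e1 : ∑ j : Fin n, ∑ k : Fin n,
      (A j k * Real.cos (θ k - θ j) * 2 - A j k * Real.cos (θ k - θ j) ^ 2 * 2)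
      = 2 * (∑ j : Fin n, ∑ k : Fin n, A j k * Real.cos (θ k - θ j))
        - 2 * (∑ j : Fin n, ∑ k : Fin n, A j k * Real.cos (θ k - θ j) ^ 2) := by
    rw [Finset.mul_sum, Finset.mul_sum, ← Finset.sum_sub_distrib]
    apply Finset.sum_congr rfl
    intro j _
    rw [Finset.mul_sum, Finset.mul_sum, ← Finset.sum_sub_distrib]
    apply Finset.sum_congr rfl
    intro k _
    ring
  rw [Finset.sum_comm, e1] at key
  linarith
end

section
/- Suppose θ is a stable equilibrium of the Kuramoto network. Then ρ₁² ≥ (1 + |ρ₂|²)/2 + (1/n²)·∑_{j=1}^{n}∑_{k=1}^{n} (1 − A j k)·(cos(θ_k − θ_j) − cos²(θ_k − θ_j)), where ρ₁ = (1/n)·∑_j cos(θ_j) and ρ₂ = (1/n)·∑_j exp(2iθ_j). -/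
/-!
Test the stability form with `v = sin θ` and `v = cos θ`. As
`(sin θ_j - sin θ_k)² + (cos θ_j - cos θ_k)² = 2 - 2 cos (θ_k - θ_j)`, the two forms add up to
`2 ∑_{j,k} A j k (c - c²) ≥ 0` with `c = cos (θ_k - θ_j)`. Summed over all pairs instead,
`∑ c = |∑ e^{iθ_j}|² = n²ρ₁²` and, since `c² = (1 + cos 2(θ_k - θ_j))/2`, `∑ c² = n²(1 + |ρ₂|²)/2`.
-/

open Finset Real

namespace Kuramoto

variable {ι : Type*} [Fintype ι]

lemma sin_sub_sin_sq_add_cos_sub_cos_sq (x y : ℝ) :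
    (sin x - sin y) ^ 2 + (cos x - cos y) ^ 2 = 2 * (1 - cos (y - x)) := by
  rw [cos_sub]
  linear_combination sin_sq_add_cos_sq x + sin_sq_add_cos_sq y

lemma sum_sum_cos_sub (φ : ι → ℝ) :
    ∑ j, ∑ k, cos (φ k - φ j) = (∑ j, cos (φ j)) ^ 2 + (∑ j, sin (φ j)) ^ 2 := by
  simp only [sq, sum_mul_sum, ← sum_add_distrib, cos_sub]
  exact sum_congr rfl fun j _ => sum_congr rfl fun k _ => by ring

lemma norm_sum_exp_mul_I_sq (φ : ι → ℝ) :
    ‖∑ j, Complex.exp (φ j * Complex.I)‖ ^ 2 = (∑ j, cos (φ j)) ^ 2 + (∑ j, sin (φ j)) ^ 2 := by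
  have hsum : ∑ j, Complex.exp (φ j * Complex.I)
      = ((∑ j, cos (φ j) : ℝ) : ℂ) + ((∑ j, sin (φ j) : ℝ) : ℂ) * Complex.I := by
    simp only [Complex.exp_mul_I, ← Complex.ofReal_cos, ← Complex.ofReal_sin]
    push_cast
    rw [sum_add_distrib, sum_mul]
  rw [hsum, Complex.sq_norm, Complex.normSq_add_mul_I]

lemma sum_sum_cos_sub_eq_norm_sq (φ : ι → ℝ) :
    ∑ j, ∑ k, cos (φ k - φ j) = ‖∑ j, Complex.exp (φ j * Complex.I)‖ ^ 2 := by
  rw [sum_sum_cos_sub, norm_sum_exp_mul_I_sq]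

lemma sum_sum_cos_sub_sq (φ : ι → ℝ) :
    ∑ j, ∑ k, cos (φ k - φ j) ^ 2
      = ((Fintype.card ι : ℝ) ^ 2 + ‖∑ j, Complex.exp (2 * φ j * Complex.I)‖ ^ 2) / 2 := by
  have hdouble : ∀ j k, 2 * (φ k - φ j) = 2 * φ k - 2 * φ j := fun _ _ => by ring
  simp only [cos_sq, hdouble, sum_add_distrib, ← sum_div]
  rw [sum_sum_cos_sub_eq_norm_sq (fun j => 2 * φ j)]
  simp only [sum_const, card_univ, nsmul_eq_mul, mul_one]
  push_cast
  ring

lemma sum_sum_mul_cos_sub_sub_cos_sub_sq_nonneg (A : ι → ι → ℝ) (θ : ι → ℝ)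
    (hstab : ∀ v : ι → ℝ, 0 ≤ ∑ j, ∑ k, A j k * cos (θ k - θ j) * (v j - v k) ^ 2) :
    0 ≤ ∑ j, ∑ k, A j k * (cos (θ k - θ j) - cos (θ k - θ j) ^ 2) := by
  have h := add_nonneg (hstab fun j => sin (θ j)) (hstab fun j => cos (θ j))
  simp only [← sum_add_distrib, ← mul_add, sin_sub_sin_sq_add_cos_sub_cos_sq] at h
  have hterm : ∀ j k, A j k * cos (θ k - θ j) * (2 * (1 - cos (θ k - θ j)))
      = 2 * (A j k * (cos (θ k - θ j) - cos (θ k - θ j) ^ 2)) := fun _ _ => by ring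
  simp only [hterm, ← mul_sum] at h
  linarith

end Kuramoto

open Kuramoto

theorem stable_equilibrium_rho1_sq_lower_bound_general
    (n : ℕ) (hn : 1 ≤ n) (A : Fin n → Fin n → ℝ) (θ : Fin n → ℝ)
    (hstab : ∀ v : Fin n → ℝ,
      0 ≤ ∑ j : Fin n, ∑ k : Fin n,
            A j k * Real.cos (θ k - θ j) * (v j - v k) ^ 2)
    (hsin0 : ∑ j : Fin n, Real.sin (θ j) = 0)
    (ρ₁ : ℝ) (hρ₁ : ρ₁ = (1 / (n : ℝ)) * ∑ j : Fin n, Real.cos (θ j))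
    (ρ₂ : ℂ) (hρ₂ : ρ₂ = (1 / (n : ℂ)) *
        ∑ j : Fin n, Complex.exp (2 * Complex.I * (θ j : ℂ))) :
    ρ₁ ^ 2 ≥ (1 + ‖ρ₂‖ ^ 2) / 2
      + (1 / (n : ℝ) ^ 2) * ∑ j : Fin n, ∑ k : Fin n,
          (1 - A j k) * (Real.cos (θ k - θ j) - Real.cos (θ k - θ j) ^ 2) := by
  have hn_pos : (0 : ℝ) < n := by exact_mod_cast hn
  have hcos : ∑ j, ∑ k, cos (θ k - θ j) = n ^ 2 * ρ₁ ^ 2 := by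
    rw [sum_sum_cos_sub, hsin0, hρ₁]
    field_simp
    ring
  have hcos_sq : ∑ j, ∑ k, cos (θ k - θ j) ^ 2 = n ^ 2 * (1 + ‖ρ₂‖ ^ 2) / 2 := by
    rw [sum_sum_cos_sub_sq, Fintype.card_fin, hρ₂, norm_mul, norm_div, norm_one,
      Complex.norm_natCast]
    rw [sum_congr rfl fun j _ => by rw [mul_right_comm]]
    field_simp
  have hsplit : ∑ j, ∑ k, A j k * (cos (θ k - θ j) - cos (θ k - θ j) ^ 2)
      = ∑ j, ∑ k, cos (θ k - θ j) - ∑ j, ∑ k, cos (θ k - θ j) ^ 2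
        - ∑ j, ∑ k, (1 - A j k) * (cos (θ k - θ j) - cos (θ k - θ j) ^ 2) := by
    simp only [← sum_sub_distrib]
    exact sum_congr rfl fun j _ => sum_congr rfl fun k _ => by ring
  have hA := sum_sum_mul_cos_sub_sub_cos_sub_sq_nonneg A θ hstab
  rw [hsplit, hcos, hcos_sq] at hA
  rw [ge_iff_le, ← sub_nonneg]
  have hexpand : ρ₁ ^ 2 - ((1 + ‖ρ₂‖ ^ 2) / 2 + 1 / (n : ℝ) ^ 2 *
      ∑ j, ∑ k, (1 - A j k) * (cos (θ k - θ j) - cos (θ k - θ j) ^ 2))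
      = (n ^ 2 * ρ₁ ^ 2 - n ^ 2 * (1 + ‖ρ₂‖ ^ 2) / 2
        - ∑ j, ∑ k, (1 - A j k) * (cos (θ k - θ j) - cos (θ k - θ j) ^ 2)) / n ^ 2 := by
    field_simp
    ring
  rw [hexpand]
  positivity

/-- If `θ` is a stable equilibrium (normalized so that `ρ₁` is real and nonnegative), then
`ρ₁² ≥ (1 + |ρ₂|²)/2 + (1/n²)·∑_{j,k} (1 − A j k)(cos(θ_k−θ_j) − cos²(θ_k−θ_j))`. -/
theorem stable_equilibrium_rho1_sq_lower_bound
    (n : ℕ) (hn : 1 ≤ n) (A : Fin n → Fin n → ℝ) (θ : Fin n → ℝ)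
    (hsym : ∀ j k, A j k = A k j)
    (h01 : ∀ j k, A j k = 0 ∨ A j k = 1)
    (hdiag : ∀ j, A j j = 1)
    (heq : ∀ j, ∑ k : Fin n, A j k * Real.sin (θ k - θ j) = 0)
    (hstab : ∀ v : Fin n → ℝ,
      0 ≤ ∑ j : Fin n, ∑ k : Fin n,
            A j k * Real.cos (θ k - θ j) * (v j - v k) ^ 2)
    (hsin0 : ∑ j : Fin n, Real.sin (θ j) = 0)
    (ρ₁ : ℝ) (hρ₁ : ρ₁ = (1 / (n : ℝ)) * ∑ j : Fin n, Real.cos (θ j))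
    (hρ₁nonneg : 0 ≤ ρ₁)
    (ρ₂ : ℂ) (hρ₂ : ρ₂ = (1 / (n : ℂ)) *
        ∑ j : Fin n, Complex.exp (2 * Complex.I * (θ j : ℂ))) :
    ρ₁ ^ 2 ≥ (1 + ‖ρ₂‖ ^ 2) / 2
      + (1 / (n : ℝ) ^ 2) * ∑ j : Fin n, ∑ k : Fin n,
          (1 - A j k) * (Real.cos (θ k - θ j) - Real.cos (θ k - θ j) ^ 2) :=
  stable_equilibrium_rho1_sq_lower_bound_general n hn A θ hstab hsin0 ρ₁ hρ₁ ρ₂ hρ₂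
end

section
/- Suppose the network has connectivity at least μ̃ and θ is a stable equilibrium. Then for every j with 1 ≤ j ≤ n: (a) ρ₁²·sin²(θ_j) ≤ (1 − μ̃)², and (b) 0 ≤ ∑_{k=1}^{n} (1 − A j k)·|cos(θ_k − θ_j)| ≤ n·√((1 − μ̃)² − ρ₁²·sin²(θ_j)), where ρ₁ = (1/n)·∑_j cos(θ_j). -/
/-- If the network has connectivity at least `μ̃` and `θ` is a stable equilibrium, then
for every `j`: (a) `ρ₁²·sin²(θ_j) ≤ (1 − μ̃)²`, and
(b) `0 ≤ ∑_k (1 − A j k)·|cos(θ_k − θ_j)| ≤ n·√((1 − μ̃)² − ρ₁²·sin²(θ_j))`. -/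
theorem stable_equilibrium_cos_bound
    (n : ℕ) (hn : 1 ≤ n) (A : Fin n → Fin n → ℝ) (θ : Fin n → ℝ) (μ : ℝ)
    (hμ0 : 0 ≤ μ) (hμ1 : μ ≤ 1)
    (hsym : ∀ j k, A j k = A k j)
    (h01 : ∀ j k, A j k = 0 ∨ A j k = 1)
    (hdiag : ∀ j, A j j = 1)
    (hconn : ∀ j, μ * n ≤ ∑ k : Fin n, A j k)
    (heq : ∀ j, ∑ k : Fin n, A j k * Real.sin (θ k - θ j) = 0)
    (hstab : ∀ v : Fin n → ℝ,
      0 ≤ ∑ j : Fin n, ∑ k : Fin n,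
            A j k * Real.cos (θ k - θ j) * (v j - v k) ^ 2)
    (hsin0 : ∑ j : Fin n, Real.sin (θ j) = 0)
    (ρ₁ : ℝ) (hρ₁ : ρ₁ = (1 / (n : ℝ)) * ∑ j : Fin n, Real.cos (θ j))
    (hρ₁nonneg : 0 ≤ ρ₁) :
    ∀ j : Fin n,
      ρ₁ ^ 2 * Real.sin (θ j) ^ 2 ≤ (1 - μ) ^ 2 ∧
      0 ≤ ∑ k : Fin n, (1 - A j k) * |Real.cos (θ k - θ j)| ∧
      ∑ k : Fin n, (1 - A j k) * |Real.cos (θ k - θ j)|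
        ≤ n * Real.sqrt ((1 - μ) ^ 2 - ρ₁ ^ 2 * Real.sin (θ j) ^ 2) := by
  intro j
  have hn' : (0:ℝ) < n := by exact_mod_cast hn
  set s : Fin n → ℝ := fun k => Real.sin (θ k - θ j) with hs
  set B : Fin n → ℝ := fun k => 1 - A j k with hB
  have hB01 : ∀ k, B k = 0 ∨ B k = 1 := by
    intro k; rcases h01 j k with h | h
    · right; simp [hB, h]
    · left; simp [hB, h]
  have hBsq : ∀ k, B k ^ 2 = B k := by
    intro k; rcases hB01 k with h | h <;> simp [h]
  have hBnonneg : ∀ k, 0 ≤ B k := by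
    intro k; rcases hB01 k with h | h <;> simp [h]
  set m : ℝ := ∑ k : Fin n, B k with hm
  have hm0 : 0 ≤ m := Finset.sum_nonneg fun k _ => hBnonneg k
  have hmle : m ≤ n * (1 - μ) := by
    have h1 := hconn j
    have h2 : m = n - ∑ k : Fin n, A j k := by
      simp [hm, hB, Finset.sum_sub_distrib]
    nlinarith
  have hsumcos : ∑ k : Fin n, Real.cos (θ k) = n * ρ₁ := by
    rw [hρ₁]; field_simp
  have hsum_s : ∑ k : Fin n, s k = -(n * ρ₁ * Real.sin (θ j)) := by
    have hrw : ∀ k : Fin n, s k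
        = Real.sin (θ k) * Real.cos (θ j) - Real.cos (θ k) * Real.sin (θ j) :=
      fun k => Real.sin_sub _ _
    rw [Finset.sum_congr rfl fun k _ => hrw k]
    rw [Finset.sum_sub_distrib, ← Finset.sum_mul, ← Finset.sum_mul, hsin0, hsumcos]
    ring
  have hkey : ∑ k : Fin n, B k * s k = -(n * ρ₁ * Real.sin (θ j)) := by
    have h2 := heq j
    have : ∑ k : Fin n, B k * s k
        = (∑ k : Fin n, s k) - ∑ k : Fin n, A j k * s k := by
      rw [← Finset.sum_sub_distrib]
      exact Finset.sum_congr rfl fun k _ => by simp [hB]; ring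
    rw [this, h2, hsum_s, sub_zero]
  have hs_sq_le : ∀ k, s k ^ 2 ≤ 1 := fun k => Real.sin_sq_le_one _
  have hCS1 : (n * ρ₁ * Real.sin (θ j)) ^ 2 ≤ m * ∑ k : Fin n, B k * s k ^ 2 := by
    have h := Finset.sum_mul_sq_le_sq_mul_sq Finset.univ B (fun k => B k * s k)
    have hL : ∑ k : Fin n, B k * (B k * s k) = ∑ k : Fin n, B k * s k := by
      refine Finset.sum_congr rfl fun k _ => ?_
      rcases hB01 k with h | h <;> simp [h]
    have hR : ∑ k : Fin n, (B k * s k) ^ 2 = ∑ k : Fin n, B k * s k ^ 2 := by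
      refine Finset.sum_congr rfl fun k _ => ?_
      rw [mul_pow, hBsq]
    rw [hL, hR, hkey] at h
    calc (n * ρ₁ * Real.sin (θ j)) ^ 2 = (-(n * ρ₁ * Real.sin (θ j))) ^ 2 := by ring
    _ ≤ (∑ k : Fin n, B k ^ 2) * ∑ k : Fin n, B k * s k ^ 2 := h
    _ = m * ∑ k : Fin n, B k * s k ^ 2 := by
        rw [hm]; congr 1; exact Finset.sum_congr rfl fun k _ => hBsq k
  have hBs2_le : ∑ k : Fin n, B k * s k ^ 2 ≤ m := by
    rw [hm]
    refine Finset.sum_le_sum fun k _ => ?_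
    nlinarith [hBnonneg k, hs_sq_le k]
  have hBs2_nonneg : 0 ≤ ∑ k : Fin n, B k * s k ^ 2 :=
    Finset.sum_nonneg fun k _ => mul_nonneg (hBnonneg k) (sq_nonneg _)
  -- part (a)
  have hDn : (n * ρ₁ * Real.sin (θ j)) ^ 2 ≤ (n * (1 - μ)) ^ 2 := by
    nlinarith
  have ha : ρ₁ ^ 2 * Real.sin (θ j) ^ 2 ≤ (1 - μ) ^ 2 := by
    nlinarith [hDn, mul_pos hn' hn']
  refine ⟨ha, ?_, ?_⟩
  · exact Finset.sum_nonneg fun k _ => mul_nonneg (hBnonneg k) (abs_nonneg _)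
  · set D : ℝ := (1 - μ) ^ 2 - ρ₁ ^ 2 * Real.sin (θ j) ^ 2 with hD
    have hD0 : 0 ≤ D := by simp [hD]; linarith
    set C : ℝ := ∑ k : Fin n, (1 - A j k) * |Real.cos (θ k - θ j)| with hC
    have hC0 : 0 ≤ C :=
      Finset.sum_nonneg fun k _ => mul_nonneg (hBnonneg k) (abs_nonneg _)
    have hcosrw : ∀ k : Fin n, |Real.cos (θ k - θ j)| = Real.sqrt (1 - s k ^ 2) := by
      intro k
      rw [← Real.sqrt_sq_eq_abs]
      congr 1
      have := Real.sin_sq_add_cos_sq (θ k - θ j)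
      simp only [hs]; linarith
    have hCS2 : C ^ 2 ≤ m * (m - ∑ k : Fin n, B k * s k ^ 2) := by
      have h := Finset.sum_mul_sq_le_sq_mul_sq Finset.univ B
        (fun k => B k * Real.sqrt (1 - s k ^ 2))
      have hL : ∑ k : Fin n, B k * (B k * Real.sqrt (1 - s k ^ 2)) = C := by
        rw [hC]
        refine Finset.sum_congr rfl fun k _ => ?_
        show B k * (B k * Real.sqrt (1 - s k ^ 2)) = B k * |Real.cos (θ k - θ j)|
        rw [hcosrw k, ← mul_assoc, ← sq, hBsq]
      have hR : ∑ k : Fin n, (B k * Real.sqrt (1 - s k ^ 2)) ^ 2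
          = m - ∑ k : Fin n, B k * s k ^ 2 := by
        rw [hm, ← Finset.sum_sub_distrib]
        refine Finset.sum_congr rfl fun k _ => ?_
        rw [mul_pow, hBsq, Real.sq_sqrt (by nlinarith [hs_sq_le k])]
        ring
      have hB2 : ∑ k : Fin n, B k ^ 2 = m := by
        rw [hm]; exact Finset.sum_congr rfl fun k _ => hBsq k
      rw [hL, hR, hB2] at h
      exact h
    have hC2 : C ^ 2 ≤ (n:ℝ) ^ 2 * D := by
      have hmm : m * m ≤ ((n:ℝ) * (1 - μ)) ^ 2 := by
        rw [sq]; exact mul_le_mul hmle hmle hm0 (mul_nonneg hn'.le (by linarith))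
      have : m * (m - ∑ k : Fin n, B k * s k ^ 2)
          ≤ (n * (1 - μ)) ^ 2 - (n * ρ₁ * Real.sin (θ j)) ^ 2 := by
        have hexp : m * (m - ∑ k : Fin n, B k * s k ^ 2)
            = m * m - m * ∑ k : Fin n, B k * s k ^ 2 := by ring
        rw [hexp]; linarith [hCS1, hmm]
      have h2 : (n * (1 - μ)) ^ 2 - (n * ρ₁ * Real.sin (θ j)) ^ 2 = (n:ℝ) ^ 2 * D := by
        rw [hD]; ring
      linarith [hCS2]
    have hfin : C ≤ Real.sqrt ((n:ℝ) ^ 2 * D) := by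
      exact (Real.le_sqrt hC0 (mul_nonneg (sq_nonneg _) hD0)).mpr hC2
    calc C ≤ Real.sqrt ((n:ℝ) ^ 2 * D) := hfin
    _ = n * Real.sqrt D := by
        rw [Real.sqrt_mul (sq_nonneg _), Real.sqrt_sq hn'.le]
end

section
/- Suppose the network has connectivity at least μ̃ and θ is a stable equilibrium. Then ρ₁·|sin(θ_j)| ≤ 1 − μ̃ for every j with 1 ≤ j ≤ n, where ρ₁ = (1/n)·∑_j cos(θ_j). -/
/-- If the network has connectivity at least `μ̃` and `θ` is a stable equilibrium, then
`ρ₁·|sin(θ_j)| ≤ 1 − μ̃` for every `j`. -/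
theorem stable_equilibrium_rho1_sin_le
    (n : ℕ) (hn : 1 ≤ n) (A : Fin n → Fin n → ℝ) (θ : Fin n → ℝ) (μ : ℝ)
    (hμ0 : 0 ≤ μ) (hμ1 : μ ≤ 1)
    (hsym : ∀ j k, A j k = A k j)
    (h01 : ∀ j k, A j k = 0 ∨ A j k = 1)
    (hdiag : ∀ j, A j j = 1)
    (hconn : ∀ j, μ * n ≤ ∑ k : Fin n, A j k)
    (heq : ∀ j, ∑ k : Fin n, A j k * Real.sin (θ k - θ j) = 0)
    (hstab : ∀ v : Fin n → ℝ,
      0 ≤ ∑ j : Fin n, ∑ k : Fin n,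
            A j k * Real.cos (θ k - θ j) * (v j - v k) ^ 2)
    (hsin0 : ∑ j : Fin n, Real.sin (θ j) = 0)
    (ρ₁ : ℝ) (hρ₁ : ρ₁ = (1 / (n : ℝ)) * ∑ j : Fin n, Real.cos (θ j))
    (hρ₁nonneg : 0 ≤ ρ₁) :
    ∀ j : Fin n, ρ₁ * |Real.sin (θ j)| ≤ 1 - μ := by
  intro j
  have hnpos : (0 : ℝ) < n := by exact_mod_cast hn
  -- second equilibrium form
  have heq' : ∑ k : Fin n, A j k * Real.sin (θ j - θ k) = 0 := by
    have h := heq j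
    have : ∑ k : Fin n, A j k * Real.sin (θ j - θ k)
        = -∑ k : Fin n, A j k * Real.sin (θ k - θ j) := by
      rw [← Finset.sum_neg_distrib]
      refine Finset.sum_congr rfl fun k _ => ?_
      rw [show θ j - θ k = -(θ k - θ j) by ring, Real.sin_neg]
      ring
    rw [this, h, neg_zero]
  -- key identity
  have key : (n : ℝ) * ρ₁ * Real.sin (θ j)
      = ∑ k : Fin n, (1 - A j k) * Real.sin (θ j - θ k) := by
    have hsum : ∑ k : Fin n, Real.sin (θ j - θ k)
        = Real.sin (θ j) * (∑ k : Fin n, Real.cos (θ k))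
          - Real.cos (θ j) * (∑ k : Fin n, Real.sin (θ k)) := by
      rw [Finset.mul_sum, Finset.mul_sum, ← Finset.sum_sub_distrib]
      refine Finset.sum_congr rfl fun k _ => ?_
      rw [Real.sin_sub]
    have hρ : (n : ℝ) * ρ₁ = ∑ k : Fin n, Real.cos (θ k) := by
      rw [hρ₁]; field_simp
    calc (n : ℝ) * ρ₁ * Real.sin (θ j)
        = Real.sin (θ j) * (∑ k : Fin n, Real.cos (θ k))
          - Real.cos (θ j) * (∑ k : Fin n, Real.sin (θ k)) := by
          rw [← hρ, hsin0]; ring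
      _ = ∑ k : Fin n, Real.sin (θ j - θ k) := hsum.symm
      _ = ∑ k : Fin n, Real.sin (θ j - θ k)
            - ∑ k : Fin n, A j k * Real.sin (θ j - θ k) := by rw [heq']; ring
      _ = ∑ k : Fin n, (1 - A j k) * Real.sin (θ j - θ k) := by
          rw [← Finset.sum_sub_distrib]
          refine Finset.sum_congr rfl fun k _ => ?_
          ring
  -- bound the sum
  have hbound : |∑ k : Fin n, (1 - A j k) * Real.sin (θ j - θ k)|
      ≤ (n : ℝ) * (1 - μ) := by
    calc |∑ k : Fin n, (1 - A j k) * Real.sin (θ j - θ k)|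
        ≤ ∑ k : Fin n, |(1 - A j k) * Real.sin (θ j - θ k)| :=
          Finset.abs_sum_le_sum_abs _ _
      _ ≤ ∑ k : Fin n, (1 - A j k) := by
          refine Finset.sum_le_sum fun k _ => ?_
          have hk : 0 ≤ 1 - A j k := by rcases h01 j k with h | h <;> simp [h]
          rw [abs_mul, abs_of_nonneg hk]
          calc (1 - A j k) * |Real.sin (θ j - θ k)| ≤ (1 - A j k) * 1 := by
                exact mul_le_mul_of_nonneg_left (Real.abs_sin_le_one _) hk
            _ = 1 - A j k := mul_one _
      _ = (n : ℝ) - ∑ k : Fin n, A j k := by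
          rw [Finset.sum_sub_distrib]; simp
      _ ≤ (n : ℝ) - μ * n := by linarith [hconn j]
      _ = (n : ℝ) * (1 - μ) := by ring
  have habs : (n : ℝ) * (ρ₁ * |Real.sin (θ j)|) ≤ (n : ℝ) * (1 - μ) := by
    have : |(n : ℝ) * ρ₁ * Real.sin (θ j)| ≤ (n : ℝ) * (1 - μ) := by
      rw [key]; exact hbound
    rw [abs_mul, abs_of_nonneg (by positivity : (0:ℝ) ≤ (n:ℝ) * ρ₁)] at this
    linarith [this]
  exact le_of_mul_le_mul_left habs hnpos
end

section
/- Suppose the network has connectivity at least μ̃ and θ is a stable equilibrium. Then ρ₁² ≥ (1 + |ρ₂|²)/2 − (2/n)·∑_{j=1}^{n} √((1 − μ̃)² − ρ₁²·sin²(θ_j)), where ρ₁ = (1/n)·∑_j cos(θ_j) and ρ₂ = (1/n)·∑_j exp(2iθ_j). (In particular each radicand (1 − μ̃)² − ρ₁²·sin²(θ_j) is nonnegative.) -/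
lemma cs_aux {m : ℕ} (w f : Fin m → ℝ) (hw : ∀ k, 0 ≤ w k) :
    (∑ k, w k * f k) ^ 2 ≤ (∑ k, w k) * ∑ k, w k * f k ^ 2 := by
  have h := Finset.sum_mul_sq_le_sq_mul_sq Finset.univ
      (fun k => Real.sqrt (w k)) (fun k => Real.sqrt (w k) * f k)
  have e1 : ∀ k : Fin m, Real.sqrt (w k) * (Real.sqrt (w k) * f k) = w k * f k := by
    intro k; rw [← mul_assoc, Real.mul_self_sqrt (hw k)]
  have e2 : ∀ k : Fin m, Real.sqrt (w k) ^ 2 = w k := fun k => Real.sq_sqrt (hw k)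
  have e3 : ∀ k : Fin m, (Real.sqrt (w k) * f k) ^ 2 = w k * f k ^ 2 := by
    intro k; rw [mul_pow, e2]
  calc (∑ k, w k * f k) ^ 2
      = (∑ k, Real.sqrt (w k) * (Real.sqrt (w k) * f k)) ^ 2 := by
        rw [Finset.sum_congr rfl fun k _ => e1 k]
    _ ≤ (∑ k, Real.sqrt (w k) ^ 2) * ∑ k, (Real.sqrt (w k) * f k) ^ 2 := h
    _ = (∑ k, w k) * ∑ k, w k * f k ^ 2 := by
        rw [Finset.sum_congr rfl fun k _ => e2 k, Finset.sum_congr rfl fun k _ => e3 k]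

set_option maxHeartbeats 1000000 in
/-- If the network has connectivity at least `μ̃` and `θ` is a stable equilibrium, then each
radicand `(1 − μ̃)² − ρ₁²·sin²(θ_j)` is nonnegative and
`ρ₁² ≥ (1 + |ρ₂|²)/2 − (2/n)·∑_j √((1 − μ̃)² − ρ₁²·sin²(θ_j))`. -/
theorem stable_equilibrium_rho1_sq_convenient_lower_bound
    (n : ℕ) (hn : 1 ≤ n) (A : Fin n → Fin n → ℝ) (θ : Fin n → ℝ) (μ : ℝ)
    (hμ0 : 0 ≤ μ) (hμ1 : μ ≤ 1)
    (hsym : ∀ j k, A j k = A k j)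
    (h01 : ∀ j k, A j k = 0 ∨ A j k = 1)
    (hdiag : ∀ j, A j j = 1)
    (hconn : ∀ j, μ * n ≤ ∑ k : Fin n, A j k)
    (heq : ∀ j, ∑ k : Fin n, A j k * Real.sin (θ k - θ j) = 0)
    (hstab : ∀ v : Fin n → ℝ,
      0 ≤ ∑ j : Fin n, ∑ k : Fin n,
            A j k * Real.cos (θ k - θ j) * (v j - v k) ^ 2)
    (hsin0 : ∑ j : Fin n, Real.sin (θ j) = 0)
    (ρ₁ : ℝ) (hρ₁ : ρ₁ = (1 / (n : ℝ)) * ∑ j : Fin n, Real.cos (θ j))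
    (hρ₁nonneg : 0 ≤ ρ₁)
    (ρ₂ : ℂ) (hρ₂ : ρ₂ = (1 / (n : ℂ)) *
        ∑ j : Fin n, Complex.exp (2 * Complex.I * (θ j : ℂ))) :
    (∀ j : Fin n, 0 ≤ (1 - μ) ^ 2 - ρ₁ ^ 2 * Real.sin (θ j) ^ 2) ∧
    ρ₁ ^ 2 ≥ (1 + ‖ρ₂‖ ^ 2) / 2
      - (2 / (n : ℝ)) * ∑ j : Fin n,
          Real.sqrt ((1 - μ) ^ 2 - ρ₁ ^ 2 * Real.sin (θ j) ^ 2) := by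
  have hn0 : (0:ℝ) < n := Nat.cast_pos.mpr hn
  have hAb : ∀ j k, 0 ≤ 1 - A j k := by
    intro j k; rcases h01 j k with h | h <;> rw [h] <;> norm_num
  have hC : (n:ℝ) * ρ₁ = ∑ j, Real.cos (θ j) := by
    rw [hρ₁]; field_simp
  -- row sums of full trig matrices
  have hrow1 : ∀ j, ∑ k, Real.cos (θ k - θ j) = (n:ℝ) * ρ₁ * Real.cos (θ j) := by
    intro j
    simp only [Real.cos_sub]
    rw [Finset.sum_add_distrib, ← Finset.sum_mul, ← Finset.sum_mul, ← hC, hsin0]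
    ring
  have hrow1s : ∀ j, ∑ k, Real.sin (θ k - θ j) = -((n:ℝ) * ρ₁ * Real.sin (θ j)) := by
    intro j
    simp only [Real.sin_sub]
    rw [Finset.sum_sub_distrib, ← Finset.sum_mul, ← Finset.sum_mul, ← hC, hsin0]
    ring
  have hrow2 : ∀ j, ∑ k, Real.cos (2 * θ k - 2 * θ j)
      = (∑ i, Real.cos (2 * θ i)) * Real.cos (2 * θ j)
        + (∑ i, Real.sin (2 * θ i)) * Real.sin (2 * θ j) := by
    intro j
    simp only [Real.cos_sub]
    rw [Finset.sum_add_distrib, ← Finset.sum_mul, ← Finset.sum_mul]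
  -- complement row sums
  have hqs : ∀ j, ∑ k, (1 - A j k) * Real.sin (θ k - θ j)
      = -((n:ℝ) * ρ₁ * Real.sin (θ j)) := by
    intro j
    have h1 : ∑ k, (1 - A j k) * Real.sin (θ k - θ j)
        = (∑ k, Real.sin (θ k - θ j)) - ∑ k, A j k * Real.sin (θ k - θ j) := by
      rw [← Finset.sum_sub_distrib]
      exact Finset.sum_congr rfl fun k _ => by ring
    rw [h1, heq j, hrow1s j]; ring
  have hr0 : ∀ j, (0:ℝ) ≤ ∑ k, (1 - A j k) :=
    fun j => Finset.sum_nonneg fun k _ => hAb j k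
  have hrn : ∀ j, (∑ k, (1 - A j k)) = (n:ℝ) - ∑ k, A j k := by
    intro j
    rw [Finset.sum_sub_distrib]
    simp [Finset.card_univ]
  have hrμ : ∀ j, (∑ k, (1 - A j k)) ≤ (1 - μ) * n := by
    intro j
    rw [hrn j]
    have := hconn j
    linarith
  -- Cauchy-Schwarz facts
  have hpq : ∀ j, (∑ k, (1 - A j k) * Real.cos (θ k - θ j)) ^ 2
      + ((n:ℝ) * ρ₁ * Real.sin (θ j)) ^ 2 ≤ (∑ k, (1 - A j k)) ^ 2 := by
    intro j
    have cs1 : (∑ k, (1 - A j k) * Real.cos (θ k - θ j)) ^ 2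
        ≤ (∑ k, (1 - A j k)) * ∑ k, (1 - A j k) * Real.cos (θ k - θ j) ^ 2 :=
      cs_aux _ _ (hAb j)
    have cs2 : (∑ k, (1 - A j k) * Real.sin (θ k - θ j)) ^ 2
        ≤ (∑ k, (1 - A j k)) * ∑ k, (1 - A j k) * Real.sin (θ k - θ j) ^ 2 :=
      cs_aux _ _ (hAb j)
    rw [hqs j] at cs2
    have hsum : (∑ k, (1 - A j k) * Real.cos (θ k - θ j) ^ 2)
        + (∑ k, (1 - A j k) * Real.sin (θ k - θ j) ^ 2) = ∑ k, (1 - A j k) := by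
      rw [← Finset.sum_add_distrib]
      exact Finset.sum_congr rfl fun k _ => by
        linear_combination (1 - A j k) * Real.sin_sq_add_cos_sq (θ k - θ j)
    nlinarith [cs1, cs2, hr0 j]
  -- Part 1
  have part1 : ∀ j : Fin n, 0 ≤ (1 - μ) ^ 2 - ρ₁ ^ 2 * Real.sin (θ j) ^ 2 := by
    intro j
    have h1 : ((n:ℝ) * ρ₁ * Real.sin (θ j)) ^ 2 ≤ ((1 - μ) * n) ^ 2 := by
      nlinarith [hpq j, hr0 j, hrμ j,
        sq_nonneg (∑ k, (1 - A j k) * Real.cos (θ k - θ j))]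
    nlinarith [h1, mul_pos hn0 hn0]
  refine ⟨part1, ?_⟩
  -- per-row key bound
  have F4 : ∀ j, -2 * (∑ k, (1 - A j k) * Real.cos (θ k - θ j)) + (∑ k, (1 - A j k))
      + (∑ k, (1 - A j k) * Real.cos (2 * θ k - 2 * θ j))
      ≤ 4 * n * Real.sqrt ((1 - μ) ^ 2 - ρ₁ ^ 2 * Real.sin (θ j) ^ 2) := by
    intro j
    have hsq : (0:ℝ) ≤ Real.sqrt ((1 - μ) ^ 2 - ρ₁ ^ 2 * Real.sin (θ j) ^ 2) :=
      Real.sqrt_nonneg _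
    rcases eq_or_lt_of_le (hr0 j) with hrz | hrpos
    · -- complement row empty
      have hz : ∀ k ∈ Finset.univ, (1 - A j k) = 0 := fun k hk =>
        (Finset.sum_eq_zero_iff_of_nonneg (fun k _ => hAb j k)).mp hrz.symm k hk
      have hpz : (∑ k, (1 - A j k) * Real.cos (θ k - θ j)) = 0 :=
        Finset.sum_eq_zero fun k hk => by rw [hz k hk]; ring
      have hez : (∑ k, (1 - A j k) * Real.cos (2 * θ k - 2 * θ j)) = 0 :=
        Finset.sum_eq_zero fun k hk => by rw [hz k hk]; ring
      rw [hpz, hez, ← hrz]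
      nlinarith [hsq, hn0]
    · -- complement row nonempty
      have hpqj := hpq j
      have hWμ := hrμ j
      have hW0 := hr0 j
      have hesplit : (∑ k, (1 - A j k) * Real.cos (2 * θ k - 2 * θ j))
          = (∑ k, (1 - A j k)) - 2 * ∑ k, (1 - A j k) * Real.sin (θ k - θ j) ^ 2 := by
        rw [Finset.mul_sum, ← Finset.sum_sub_distrib]
        refine Finset.sum_congr rfl fun k _ => ?_
        have hcos : Real.cos (2 * θ k - 2 * θ j) = 1 - 2 * Real.sin (θ k - θ j) ^ 2 := by
          rw [show 2 * θ k - 2 * θ j = 2 * (θ k - θ j) by ring, Real.cos_two_mul']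
          linear_combination Real.sin_sq_add_cos_sq (θ k - θ j)
        rw [hcos]; ring
      have cs2 : (∑ k, (1 - A j k) * Real.sin (θ k - θ j)) ^ 2
          ≤ (∑ k, (1 - A j k)) * ∑ k, (1 - A j k) * Real.sin (θ k - θ j) ^ 2 :=
        cs_aux _ _ (hAb j)
      rw [hqs j] at cs2
      set W : ℝ := ∑ k, (1 - A j k) with hWd
      set P : ℝ := ∑ k, (1 - A j k) * Real.cos (θ k - θ j) with hPd
      set E : ℝ := ∑ k, (1 - A j k) * Real.cos (2 * θ k - 2 * θ j) with hEd
      set S2 : ℝ := ∑ k, (1 - A j k) * Real.sin (θ k - θ j) ^ 2 with hS2d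
      set L : ℝ := (n:ℝ) * ρ₁ * Real.sin (θ j) with hLd
      -- now small atoms
      have hq2r : L ^ 2 ≤ W ^ 2 := by nlinarith [hpqj, sq_nonneg P]
      set R : ℝ := Real.sqrt (W ^ 2 - L ^ 2) with hR
      have hR0 : 0 ≤ R := Real.sqrt_nonneg _
      have hR2 : R ^ 2 = W ^ 2 - L ^ 2 := Real.sq_sqrt (by linarith)
      have hRr : R ≤ W := by
        rw [hR]
        calc Real.sqrt (W ^ 2 - L ^ 2) ≤ Real.sqrt (W ^ 2) :=
              Real.sqrt_le_sqrt (by nlinarith [sq_nonneg L])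
          _ = W := Real.sqrt_sq hW0
      have hpR : -P ≤ R := by nlinarith [hpqj, hR2, hR0]
      have hre : W * E ≤ W ^ 2 - 2 * L ^ 2 := by nlinarith [hesplit, cs2]
      have hmain : -2 * P + W + E ≤ 4 * R := by
        have h1 : (-P) * W ≤ R * W := mul_le_mul_of_nonneg_right hpR hW0
        have h2 : R * R ≤ R * W := mul_le_mul_of_nonneg_left hRr hR0
        have hmul : W * (-2 * P + W + E) ≤ W * (4 * R) := by
          nlinarith [hre, h1, h2, hR2]
        exact le_of_mul_le_mul_left hmul hrpos
      have hRn : R ≤ n * Real.sqrt ((1 - μ) ^ 2 - ρ₁ ^ 2 * Real.sin (θ j) ^ 2) := by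
        have hle : W ^ 2 - L ^ 2
            ≤ (n:ℝ) ^ 2 * ((1 - μ) ^ 2 - ρ₁ ^ 2 * Real.sin (θ j) ^ 2) := by
          have hL2 : L ^ 2 = (n:ℝ) ^ 2 * (ρ₁ ^ 2 * Real.sin (θ j) ^ 2) := by
            rw [hLd]; ring
          nlinarith [hWμ, hW0, hμ1]
        calc R ≤ Real.sqrt ((n:ℝ) ^ 2 * ((1 - μ) ^ 2 - ρ₁ ^ 2 * Real.sin (θ j) ^ 2)) :=
              Real.sqrt_le_sqrt hle
          _ = n * Real.sqrt ((1 - μ) ^ 2 - ρ₁ ^ 2 * Real.sin (θ j) ^ 2) := by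
              rw [Real.sqrt_mul (by positivity), Real.sqrt_sq hn0.le]
      linarith
  -- global stability inequality
  have h1' : 0 ≤ ∑ j, ∑ k, A j k * Real.cos (θ k - θ j)
      * (Real.sin (θ j) - Real.sin (θ k)) ^ 2 := hstab fun j => Real.sin (θ j)
  have h2' : 0 ≤ ∑ j, ∑ k, A j k * Real.cos (θ k - θ j)
      * (Real.cos (θ j) - Real.cos (θ k)) ^ 2 := hstab fun j => Real.cos (θ j)
  have hpoint : ∀ j k : Fin n,
      A j k * (2 * Real.cos (θ k - θ j) - 1 - Real.cos (2 * θ k - 2 * θ j))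
      = A j k * Real.cos (θ k - θ j) * (Real.sin (θ j) - Real.sin (θ k)) ^ 2
        + A j k * Real.cos (θ k - θ j) * (Real.cos (θ j) - Real.cos (θ k)) ^ 2 := by
    intro j k
    have e4 : Real.cos (2 * θ k - 2 * θ j) = 2 * Real.cos (θ k - θ j) ^ 2 - 1 := by
      rw [show 2 * θ k - 2 * θ j = 2 * (θ k - θ j) by ring, Real.cos_two_mul]
    have e5 : (Real.sin (θ j) - Real.sin (θ k)) ^ 2 + (Real.cos (θ j) - Real.cos (θ k)) ^ 2
        = 2 - 2 * Real.cos (θ k - θ j) := by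
      rw [Real.cos_sub]
      linear_combination Real.sin_sq_add_cos_sq (θ j) + Real.sin_sq_add_cos_sq (θ k)
    rw [e4]
    linear_combination (-(A j k * Real.cos (θ k - θ j))) * e5
  have hQ : 0 ≤ ∑ j, ∑ k, A j k
      * (2 * Real.cos (θ k - θ j) - 1 - Real.cos (2 * θ k - 2 * θ j)) := by
    have hEq : (∑ j, ∑ k, A j k
        * (2 * Real.cos (θ k - θ j) - 1 - Real.cos (2 * θ k - 2 * θ j)))
        = (∑ j, ∑ k, A j k * Real.cos (θ k - θ j) * (Real.sin (θ j) - Real.sin (θ k)) ^ 2)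
          + ∑ j, ∑ k, A j k * Real.cos (θ k - θ j) * (Real.cos (θ j) - Real.cos (θ k)) ^ 2 := by
      rw [← Finset.sum_add_distrib]
      refine Finset.sum_congr rfl fun j _ => ?_
      rw [← Finset.sum_add_distrib]
      exact Finset.sum_congr rfl fun k _ => hpoint j k
    rw [hEq]
    exact add_nonneg h1' h2'
  -- rewrite rows of hQ
  have hrowQ : ∀ j, ∑ k, A j k
      * (2 * Real.cos (θ k - θ j) - 1 - Real.cos (2 * θ k - 2 * θ j))
      = 2 * ((n:ℝ) * ρ₁ * Real.cos (θ j) - ∑ k, (1 - A j k) * Real.cos (θ k - θ j))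
        - ((n:ℝ) - ∑ k, (1 - A j k))
        - ((∑ i, Real.cos (2 * θ i)) * Real.cos (2 * θ j)
            + (∑ i, Real.sin (2 * θ i)) * Real.sin (2 * θ j)
            - ∑ k, (1 - A j k) * Real.cos (2 * θ k - 2 * θ j)) := by
    intro j
    have hF : ∑ k, A j k * Real.cos (θ k - θ j)
        = (n:ℝ) * ρ₁ * Real.cos (θ j) - ∑ k, (1 - A j k) * Real.cos (θ k - θ j) := by
      rw [← hrow1 j, ← Finset.sum_sub_distrib]
      exact Finset.sum_congr rfl fun k _ => by ring
    have hG : ∑ k, A j k = (n:ℝ) - ∑ k, (1 - A j k) := by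
      have := hrn j; linarith
    have hH : ∑ k, A j k * Real.cos (2 * θ k - 2 * θ j)
        = (∑ i, Real.cos (2 * θ i)) * Real.cos (2 * θ j)
          + (∑ i, Real.sin (2 * θ i)) * Real.sin (2 * θ j)
          - ∑ k, (1 - A j k) * Real.cos (2 * θ k - 2 * θ j) := by
      rw [← hrow2 j, ← Finset.sum_sub_distrib]
      exact Finset.sum_congr rfl fun k _ => by ring
    calc ∑ k, A j k * (2 * Real.cos (θ k - θ j) - 1 - Real.cos (2 * θ k - 2 * θ j))
        = 2 * (∑ k, A j k * Real.cos (θ k - θ j)) - (∑ k, A j k)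
          - ∑ k, A j k * Real.cos (2 * θ k - 2 * θ j) := by
          rw [Finset.mul_sum, ← Finset.sum_sub_distrib, ← Finset.sum_sub_distrib]
          exact Finset.sum_congr rfl fun k _ => by ring
      _ = _ := by rw [hF, hG, hH]
  have hQ2 : 0 ≤ ∑ j, (2 * ((n:ℝ) * ρ₁ * Real.cos (θ j)
      - ∑ k, (1 - A j k) * Real.cos (θ k - θ j))
      - ((n:ℝ) - ∑ k, (1 - A j k))
      - ((∑ i, Real.cos (2 * θ i)) * Real.cos (2 * θ j)
          + (∑ i, Real.sin (2 * θ i)) * Real.sin (2 * θ j)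
          - ∑ k, (1 - A j k) * Real.cos (2 * θ k - 2 * θ j))) := by
    rw [← Finset.sum_congr rfl fun j (_ : j ∈ Finset.univ) => hrowQ j]
    exact hQ
  -- split the outer sum
  have hsplit : (∑ j, (2 * ((n:ℝ) * ρ₁ * Real.cos (θ j)
      - ∑ k, (1 - A j k) * Real.cos (θ k - θ j))
      - ((n:ℝ) - ∑ k, (1 - A j k))
      - ((∑ i, Real.cos (2 * θ i)) * Real.cos (2 * θ j)
          + (∑ i, Real.sin (2 * θ i)) * Real.sin (2 * θ j)
          - ∑ k, (1 - A j k) * Real.cos (2 * θ k - 2 * θ j))))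
      = (2 * ((n:ℝ) * ρ₁) * ((n:ℝ) * ρ₁) - (n:ℝ) * n
          - (∑ i, Real.cos (2 * θ i)) * (∑ i, Real.cos (2 * θ i))
          - (∑ i, Real.sin (2 * θ i)) * (∑ i, Real.sin (2 * θ i)))
        + ∑ j, (-2 * (∑ k, (1 - A j k) * Real.cos (θ k - θ j)) + (∑ k, (1 - A j k))
            + ∑ k, (1 - A j k) * Real.cos (2 * θ k - 2 * θ j)) := by
    have step : ∀ j : Fin n, (2 * ((n:ℝ) * ρ₁ * Real.cos (θ j)
        - ∑ k, (1 - A j k) * Real.cos (θ k - θ j))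
        - ((n:ℝ) - ∑ k, (1 - A j k))
        - ((∑ i, Real.cos (2 * θ i)) * Real.cos (2 * θ j)
            + (∑ i, Real.sin (2 * θ i)) * Real.sin (2 * θ j)
            - ∑ k, (1 - A j k) * Real.cos (2 * θ k - 2 * θ j)))
        = (2 * ((n:ℝ) * ρ₁) * Real.cos (θ j) - (n:ℝ)
            - (∑ i, Real.cos (2 * θ i)) * Real.cos (2 * θ j)
            - (∑ i, Real.sin (2 * θ i)) * Real.sin (2 * θ j))
          + (-2 * (∑ k, (1 - A j k) * Real.cos (θ k - θ j)) + (∑ k, (1 - A j k))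
            + ∑ k, (1 - A j k) * Real.cos (2 * θ k - 2 * θ j)) := fun j => by ring
    rw [Finset.sum_congr rfl fun j (_ : j ∈ Finset.univ) => step j, Finset.sum_add_distrib]
    congr 1
    rw [Finset.sum_sub_distrib, Finset.sum_sub_distrib, Finset.sum_sub_distrib,
      ← Finset.mul_sum, ← Finset.mul_sum, ← Finset.mul_sum, ← hC]
    simp only [Finset.sum_const, Finset.card_univ, Fintype.card_fin, nsmul_eq_mul, mul_one]
  have hm : ∑ j, (-2 * (∑ k, (1 - A j k) * Real.cos (θ k - θ j)) + (∑ k, (1 - A j k))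
      + ∑ k, (1 - A j k) * Real.cos (2 * θ k - 2 * θ j))
      ≤ 4 * n * ∑ j, Real.sqrt ((1 - μ) ^ 2 - ρ₁ ^ 2 * Real.sin (θ j) ^ 2) := by
    calc ∑ j, (-2 * (∑ k, (1 - A j k) * Real.cos (θ k - θ j)) + (∑ k, (1 - A j k))
        + ∑ k, (1 - A j k) * Real.cos (2 * θ k - 2 * θ j))
        ≤ ∑ j, 4 * n * Real.sqrt ((1 - μ) ^ 2 - ρ₁ ^ 2 * Real.sin (θ j) ^ 2) :=
          Finset.sum_le_sum fun j _ => F4 j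
      _ = 4 * n * ∑ j, Real.sqrt ((1 - μ) ^ 2 - ρ₁ ^ 2 * Real.sin (θ j) ^ 2) := by
          rw [Finset.mul_sum]
  have key : (∑ i, Real.cos (2 * θ i)) * (∑ i, Real.cos (2 * θ i))
      + (∑ i, Real.sin (2 * θ i)) * (∑ i, Real.sin (2 * θ i)) + (n:ℝ) * n
      ≤ 2 * ((n:ℝ) * ρ₁) * ((n:ℝ) * ρ₁)
        + 4 * n * ∑ j, Real.sqrt ((1 - μ) ^ 2 - ρ₁ ^ 2 * Real.sin (θ j) ^ 2) := by
    rw [hsplit] at hQ2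
    linarith
  -- compute |ρ₂|²
  have hexp : ∀ j, Complex.exp (2 * Complex.I * (θ j : ℂ))
      = (Real.cos (2 * θ j) : ℂ) + (Real.sin (2 * θ j) : ℂ) * Complex.I := by
    intro j
    rw [show (2 * Complex.I * (θ j : ℂ)) = ((2 * θ j : ℝ) : ℂ) * Complex.I by
      push_cast; ring]
    rw [Complex.exp_mul_I, ← Complex.ofReal_cos, ← Complex.ofReal_sin]
  have hρ₂' : ρ₂ = (((∑ i, Real.cos (2 * θ i) : ℝ) : ℂ)
      + ((∑ i, Real.sin (2 * θ i) : ℝ) : ℂ) * Complex.I) / n := by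
    rw [hρ₂, Finset.sum_congr rfl fun j (_ : j ∈ Finset.univ) => hexp j,
      Finset.sum_add_distrib, ← Finset.sum_mul]
    push_cast
    ring
  have habs : ‖ρ₂‖ ^ 2 = ((∑ i, Real.cos (2 * θ i)) * (∑ i, Real.cos (2 * θ i))
      + (∑ i, Real.sin (2 * θ i)) * (∑ i, Real.sin (2 * θ i))) / (n:ℝ) ^ 2 := by
    rw [hρ₂', Complex.sq_norm, Complex.normSq_div, Complex.normSq_add_mul_I,
      Complex.normSq_natCast]
    ring
  -- finish
  rw [ge_iff_le, habs]
  have hpos : (0:ℝ) < 2 * (n:ℝ) ^ 2 := by positivity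
  refine le_of_mul_le_mul_right ?_ hpos
  have eL : ((1 + ((∑ i, Real.cos (2 * θ i)) * (∑ i, Real.cos (2 * θ i))
      + (∑ i, Real.sin (2 * θ i)) * (∑ i, Real.sin (2 * θ i))) / (n:ℝ) ^ 2) / 2
      - 2 / (n:ℝ) * ∑ j, Real.sqrt ((1 - μ) ^ 2 - ρ₁ ^ 2 * Real.sin (θ j) ^ 2))
      * (2 * (n:ℝ) ^ 2)
      = (n:ℝ) ^ 2 + ((∑ i, Real.cos (2 * θ i)) * (∑ i, Real.cos (2 * θ i))
          + (∑ i, Real.sin (2 * θ i)) * (∑ i, Real.sin (2 * θ i)))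
        - 4 * n * ∑ j, Real.sqrt ((1 - μ) ^ 2 - ρ₁ ^ 2 * Real.sin (θ j) ^ 2) := by
    field_simp
    ring
  rw [eL]
  nlinarith [key]
end

section
/- Suppose the network has connectivity at least μ̃ and θ is a stable equilibrium. Then ρ₁² ≥ 2·(μ̃ − 3/4) + |ρ₂|²/2, where ρ₁ = (1/n)·∑_j cos(θ_j) and ρ₂ = (1/n)·∑_j exp(2iθ_j). -/
lemma sum_cos_sub_eq (n : ℕ) (a : Fin n → ℝ) :
    ∑ j : Fin n, ∑ k : Fin n, Real.cos (a k - a j)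
      = (∑ j : Fin n, Real.cos (a j)) ^ 2 + (∑ j : Fin n, Real.sin (a j)) ^ 2 := by
  have h : ∀ j : Fin n, ∑ k : Fin n, Real.cos (a k - a j)
      = (∑ k : Fin n, Real.cos (a k)) * Real.cos (a j)
        + (∑ k : Fin n, Real.sin (a k)) * Real.sin (a j) := by
    intro j
    rw [Finset.sum_mul, Finset.sum_mul, ← Finset.sum_add_distrib]
    exact Finset.sum_congr rfl fun k _ => by rw [Real.cos_sub]
  simp_rw [h]
  rw [Finset.sum_add_distrib, ← Finset.mul_sum, ← Finset.mul_sum]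
  ring

/-- If the network has connectivity at least `μ̃` and `θ` is a stable equilibrium, then
`ρ₁² ≥ 2·(μ̃ − 3/4) + |ρ₂|²/2`. -/
theorem stable_equilibrium_rho1_sq_ge_connectivity_bound
    (n : ℕ) (hn : 1 ≤ n) (A : Fin n → Fin n → ℝ) (θ : Fin n → ℝ) (μ : ℝ)
    (hμ0 : 0 ≤ μ) (hμ1 : μ ≤ 1)
    (hsym : ∀ j k, A j k = A k j)
    (h01 : ∀ j k, A j k = 0 ∨ A j k = 1)
    (hdiag : ∀ j, A j j = 1)
    (hconn : ∀ j, μ * n ≤ ∑ k : Fin n, A j k)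
    (heq : ∀ j, ∑ k : Fin n, A j k * Real.sin (θ k - θ j) = 0)
    (hstab : ∀ v : Fin n → ℝ,
      0 ≤ ∑ j : Fin n, ∑ k : Fin n,
            A j k * Real.cos (θ k - θ j) * (v j - v k) ^ 2)
    (hsin0 : ∑ j : Fin n, Real.sin (θ j) = 0)
    (ρ₁ : ℝ) (hρ₁ : ρ₁ = (1 / (n : ℝ)) * ∑ j : Fin n, Real.cos (θ j))
    (hρ₁nonneg : 0 ≤ ρ₁)
    (ρ₂ : ℂ) (hρ₂ : ρ₂ = (1 / (n : ℂ)) *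
        ∑ j : Fin n, Complex.exp (2 * Complex.I * (θ j : ℂ))) :
    ρ₁ ^ 2 ≥ 2 * (μ - 3 / 4) + ‖ρ₂‖ ^ 2 / 2 := by
  have hN : (0 : ℝ) < (n : ℝ) := by exact_mod_cast Nat.pos_of_ne_zero (by omega)
  set N : ℝ := (n : ℝ) with hNdef
  set C := ∑ j : Fin n, Real.cos (θ j) with hC
  set X := ∑ j : Fin n, Real.cos (2 * θ j) with hX
  set Y := ∑ j : Fin n, Real.sin (2 * θ j) with hY
  set m := ∑ j : Fin n, ∑ k : Fin n, A j k with hm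
  set S1 := ∑ j : Fin n, ∑ k : Fin n, A j k * Real.cos (θ k - θ j) with hS1
  set S2 := ∑ j : Fin n, ∑ k : Fin n, A j k * Real.cos (θ k - θ j) ^ 2 with hS2
  have hA0 : ∀ j k, 0 ≤ A j k := fun j k => by rcases h01 j k with h | h <;> simp [h]
  have hA1 : ∀ j k, A j k ≤ 1 := fun j k => by rcases h01 j k with h | h <;> simp [h]
  -- m ≥ μ N²
  have hμm : μ * N ^ 2 ≤ m := by
    calc μ * N ^ 2 = ∑ _j : Fin n, μ * N := by
          rw [Finset.sum_const, Finset.card_univ, Fintype.card_fin, nsmul_eq_mul]; ring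
      _ ≤ m := Finset.sum_le_sum fun j _ => hconn j
  -- stability with v = cos θ and v = sin θ gives S2 ≤ S1
  have hS2S1 : S2 ≤ S1 := by
    have h1 := hstab fun j => Real.cos (θ j)
    have h2 := hstab fun j => Real.sin (θ j)
    have hsum : (∑ j : Fin n, ∑ k : Fin n,
          A j k * Real.cos (θ k - θ j) * (Real.cos (θ j) - Real.cos (θ k)) ^ 2)
        + (∑ j : Fin n, ∑ k : Fin n,
          A j k * Real.cos (θ k - θ j) * (Real.sin (θ j) - Real.sin (θ k)) ^ 2)
        = 2 * S1 - 2 * S2 := by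
      rw [hS1, hS2, Finset.mul_sum, Finset.mul_sum, ← Finset.sum_sub_distrib,
        ← Finset.sum_add_distrib]
      refine Finset.sum_congr rfl fun j _ => ?_
      rw [Finset.mul_sum, Finset.mul_sum, ← Finset.sum_sub_distrib, ← Finset.sum_add_distrib]
      refine Finset.sum_congr rfl fun k _ => ?_
      have hpyth : (Real.cos (θ j) - Real.cos (θ k)) ^ 2
          + (Real.sin (θ j) - Real.sin (θ k)) ^ 2 = 2 - 2 * Real.cos (θ k - θ j) := by
        rw [Real.cos_sub]
        nlinarith [Real.sin_sq_add_cos_sq (θ j), Real.sin_sq_add_cos_sq (θ k)]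
      linear_combination (A j k * Real.cos (θ k - θ j)) * hpyth
    linarith
  -- ∑∑ A cos(2θk - 2θj) = 2 S2 - m
  have hA2 : ∑ j : Fin n, ∑ k : Fin n, A j k * Real.cos (2 * θ k - 2 * θ j)
      = 2 * S2 - m := by
    rw [hS2, hm, Finset.mul_sum, ← Finset.sum_sub_distrib]
    refine Finset.sum_congr rfl fun j _ => ?_
    rw [Finset.mul_sum, ← Finset.sum_sub_distrib]
    refine Finset.sum_congr rfl fun k _ => ?_
    have : 2 * θ k - 2 * θ j = 2 * (θ k - θ j) := by ring
    rw [this, Real.cos_two_mul]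
    ring
  -- double sums of pure cosines
  have hT1 : ∑ j : Fin n, ∑ k : Fin n, Real.cos (θ k - θ j) = C ^ 2 := by
    rw [sum_cos_sub_eq n θ, ← hC, hsin0]; ring
  have hT2 : ∑ j : Fin n, ∑ k : Fin n, Real.cos (2 * θ k - 2 * θ j) = X ^ 2 + Y ^ 2 := by
    exact sum_cos_sub_eq n (fun j => 2 * θ j)
  -- bound missing edges: X² + Y² ≤ 2 S2 - m + (N² - m)
  have hb : X ^ 2 + Y ^ 2 ≤ 2 * S2 - m + (N ^ 2 - m) := by
    have hpos : 0 ≤ ∑ j : Fin n, ∑ k : Fin n,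
        (1 - A j k) * (1 - Real.cos (2 * θ k - 2 * θ j)) := by
      refine Finset.sum_nonneg fun j _ => Finset.sum_nonneg fun k _ => ?_
      have := Real.cos_le_one (2 * θ k - 2 * θ j)
      nlinarith [hA1 j k]
    have hexp : ∑ j : Fin n, ∑ k : Fin n,
        (1 - A j k) * (1 - Real.cos (2 * θ k - 2 * θ j))
        = N ^ 2 - (X ^ 2 + Y ^ 2) - m + (2 * S2 - m) := by
      have e : ∀ j k : Fin n, (1 - A j k) * (1 - Real.cos (2 * θ k - 2 * θ j))
          = 1 - Real.cos (2 * θ k - 2 * θ j) - A j k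
            + A j k * Real.cos (2 * θ k - 2 * θ j) := fun j k => by ring
      simp_rw [e]
      simp only [Finset.sum_add_distrib, Finset.sum_sub_distrib, Finset.sum_const,
        Finset.card_univ, Fintype.card_fin, nsmul_eq_mul, mul_one]
      rw [hT2, hA2, ← hm]
      ring
    linarith [hexp ▸ hpos]
  -- bound: S1 ≤ C² + N² - m
  have hc : S1 ≤ C ^ 2 + (N ^ 2 - m) := by
    have hpos : 0 ≤ ∑ j : Fin n, ∑ k : Fin n,
        (1 - A j k) * (1 + Real.cos (θ k - θ j)) := by
      refine Finset.sum_nonneg fun j _ => Finset.sum_nonneg fun k _ => ?_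
      have := Real.neg_one_le_cos (θ k - θ j)
      nlinarith [hA1 j k]
    have hexp : ∑ j : Fin n, ∑ k : Fin n, (1 - A j k) * (1 + Real.cos (θ k - θ j))
        = N ^ 2 + C ^ 2 - m - S1 := by
      have e : ∀ j k : Fin n, (1 - A j k) * (1 + Real.cos (θ k - θ j))
          = 1 + Real.cos (θ k - θ j) - A j k - A j k * Real.cos (θ k - θ j) :=
        fun j k => by ring
      simp_rw [e]
      simp only [Finset.sum_add_distrib, Finset.sum_sub_distrib, Finset.sum_const,
        Finset.card_univ, Fintype.card_fin, nsmul_eq_mul, mul_one]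
      rw [hT1, ← hm, ← hS1]
      ring
    linarith [hexp ▸ hpos]
  -- express ρ₂
  have hexp : ∀ j : Fin n, Complex.exp (2 * Complex.I * (θ j : ℂ))
      = ((Real.cos (2 * θ j) : ℝ) : ℂ) + ((Real.sin (2 * θ j) : ℝ) : ℂ) * Complex.I := by
    intro j
    have h2 : (2 : ℂ) * Complex.I * (θ j : ℂ) = ((2 * θ j : ℝ) : ℂ) * Complex.I := by
      push_cast; ring
    rw [h2, Complex.exp_mul_I, Complex.ofReal_cos, Complex.ofReal_sin]
  have hsumexp : (∑ j : Fin n, Complex.exp (2 * Complex.I * (θ j : ℂ)))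
      = ((X : ℝ) : ℂ) + ((Y : ℝ) : ℂ) * Complex.I := by
    simp_rw [hexp]
    rw [Finset.sum_add_distrib, ← Finset.sum_mul, ← Complex.ofReal_sum, ← Complex.ofReal_sum]
  have hρ₂' : ρ₂ = (1 / (n : ℂ)) * (((X : ℝ) : ℂ) + ((Y : ℝ) : ℂ) * Complex.I) := by
    rw [hρ₂, hsumexp]
  have habs2 : ‖ρ₂‖ ^ 2 = (X / N) ^ 2 + (Y / N) ^ 2 := by
    rw [hρ₂', Complex.sq_norm, Complex.normSq_mul]
    have h1 : Complex.normSq (1 / (n : ℂ)) = 1 / N ^ 2 := by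
      simp [Complex.normSq_apply, hNdef]
      ring
    have h2 : Complex.normSq (((X : ℝ) : ℂ) + ((Y : ℝ) : ℂ) * Complex.I)
        = X ^ 2 + Y ^ 2 := by
      simp [Complex.normSq_apply]
      ring
    rw [h1, h2]
    field_simp
  -- final arithmetic
  have hρC : ρ₁ * N = C := by rw [hρ₁]; field_simp
  have hchain : X ^ 2 + Y ^ 2 ≤ 2 * C ^ 2 + 3 * N ^ 2 - 4 * (μ * N ^ 2) := by
    linarith [hb, hc, hS2S1, hμm]
  have hN2 : (0 : ℝ) < N ^ 2 := by positivity
  rw [ge_iff_le, habs2]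
  have hX2 : (X / N) ^ 2 = X ^ 2 / N ^ 2 := by rw [div_pow]
  have hY2 : (Y / N) ^ 2 = Y ^ 2 / N ^ 2 := by rw [div_pow]
  rw [hX2, hY2]
  rw [← add_div, div_div]
  rw [← hρC] at hchain
  have key : (X ^ 2 + Y ^ 2) / (N ^ 2 * 2) ≤ ρ₁ ^ 2 - 2 * (μ - 3 / 4) := by
    rw [div_le_iff₀ (by positivity)]
    calc X ^ 2 + Y ^ 2 ≤ 2 * (ρ₁ * N) ^ 2 + 3 * N ^ 2 - 4 * (μ * N ^ 2) := hchain
      _ = (ρ₁ ^ 2 - 2 * (μ - 3 / 4)) * (N ^ 2 * 2) := by ring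
  linarith
end

section
/- Suppose the network has connectivity at least μ̃ and θ is a stable equilibrium with ρ₁ > 0, where ρ₁ = (1/n)·∑_j cos(θ_j). Then for every x₀ with 0 ≤ x₀ ≤ min{1, (1 − μ̃)²/ρ₁²}, the inequality |ρ₂| ≥ a + b·(1 + |ρ₂|² − 2ρ₁²) holds, where a = 1 + 2x₀ − 4(1 − μ̃)²/ρ₁², b = √((1 − μ̃)² − ρ₁²·x₀)/ρ₁², and ρ₂ = (1/n)·∑_j exp(2iθ_j). -/
private lemma sum_sum_cos_sub {n : ℕ} (φ : Fin n → ℝ) :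
    ∑ j : Fin n, ∑ k : Fin n, Real.cos (φ k - φ j)
      = (∑ j : Fin n, Real.cos (φ j)) ^ 2 + (∑ j : Fin n, Real.sin (φ j)) ^ 2 := by
  have h : ∀ j, ∑ k : Fin n, Real.cos (φ k - φ j)
      = (∑ k : Fin n, Real.cos (φ k)) * Real.cos (φ j)
        + (∑ k : Fin n, Real.sin (φ k)) * Real.sin (φ j) := by
    intro j
    rw [Finset.sum_mul, Finset.sum_mul, ← Finset.sum_add_distrib]
    exact Finset.sum_congr rfl fun k _ => by rw [Real.cos_sub]
  rw [Finset.sum_congr rfl fun j _ => h j, Finset.sum_add_distrib, ← Finset.mul_sum,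
    ← Finset.mul_sum, sq, sq]

private lemma sum_sin_sub {n : ℕ} (θ : Fin n → ℝ) (t : ℝ) :
    ∑ k : Fin n, Real.sin (θ k - t)
      = (∑ k : Fin n, Real.sin (θ k)) * Real.cos t - (∑ k : Fin n, Real.cos (θ k)) * Real.sin t := by
  rw [Finset.sum_mul, Finset.sum_mul, ← Finset.sum_sub_distrib]
  exact Finset.sum_congr rfl fun k _ => by rw [Real.sin_sub]

private lemma cs01 {n : ℕ} (E : Fin n → ℝ) (hE : ∀ k, E k ^ 2 = E k) (f : Fin n → ℝ) :
    (∑ k : Fin n, E k * f k) ^ 2 ≤ (∑ k : Fin n, E k) * ∑ k : Fin n, E k * f k ^ 2 := by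
  have h := Finset.sum_mul_sq_le_sq_mul_sq Finset.univ E (fun k => E k * f k)
  have e1 : ∑ k : Fin n, E k * (E k * f k) = ∑ k : Fin n, E k * f k :=
    Finset.sum_congr rfl fun k _ => by rw [← mul_assoc, ← sq, hE k]
  have e2 : ∑ k : Fin n, E k ^ 2 = ∑ k : Fin n, E k :=
    Finset.sum_congr rfl fun k _ => hE k
  have e3 : ∑ k : Fin n, (E k * f k) ^ 2 = ∑ k : Fin n, E k * f k ^ 2 :=
    Finset.sum_congr rfl fun k _ => by rw [mul_pow, hE k]
  rw [e1, e2, e3] at h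
  exact h

set_option maxHeartbeats 2000000 in
/-- If the network has connectivity at least `μ̃` and `θ` is a stable equilibrium with
`ρ₁ > 0`, then for every admissible `x₀`, `|ρ₂| ≥ a + b·(1 + |ρ₂|² − 2ρ₁²)`, where
`a = 1 + 2x₀ − 4(1 − μ̃)²/ρ₁²` and `b = √((1 − μ̃)² − ρ₁²x₀)/ρ₁²`. -/
theorem stable_equilibrium_rho2_lower_bound
    (n : ℕ) (hn : 1 ≤ n) (A : Fin n → Fin n → ℝ) (θ : Fin n → ℝ) (μ : ℝ)
    (hμ0 : 0 ≤ μ) (hμ1 : μ ≤ 1)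
    (hsym : ∀ j k, A j k = A k j)
    (h01 : ∀ j k, A j k = 0 ∨ A j k = 1)
    (hdiag : ∀ j, A j j = 1)
    (hconn : ∀ j, μ * n ≤ ∑ k : Fin n, A j k)
    (heq : ∀ j, ∑ k : Fin n, A j k * Real.sin (θ k - θ j) = 0)
    (hstab : ∀ v : Fin n → ℝ,
      0 ≤ ∑ j : Fin n, ∑ k : Fin n,
            A j k * Real.cos (θ k - θ j) * (v j - v k) ^ 2)
    (hsin0 : ∑ j : Fin n, Real.sin (θ j) = 0)
    (ρ₁ : ℝ) (hρ₁ : ρ₁ = (1 / (n : ℝ)) * ∑ j : Fin n, Real.cos (θ j))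
    (hρ₁pos : 0 < ρ₁)
    (ρ₂ : ℂ) (hρ₂ : ρ₂ = (1 / (n : ℂ)) *
        ∑ j : Fin n, Complex.exp (2 * Complex.I * (θ j : ℂ))) :
    ∀ x₀ : ℝ, 0 ≤ x₀ → x₀ ≤ min 1 ((1 - μ) ^ 2 / ρ₁ ^ 2) →
      ‖ρ₂‖ ≥ (1 + 2 * x₀ - 4 * (1 - μ) ^ 2 / ρ₁ ^ 2)
        + (Real.sqrt ((1 - μ) ^ 2 - ρ₁ ^ 2 * x₀) / ρ₁ ^ 2)
          * (1 + ‖ρ₂‖ ^ 2 - 2 * ρ₁ ^ 2) := by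
  intro x₀ hx₀0 hx₀le
  set N : ℝ := (n : ℝ) with hN
  have hn0 : (0:ℝ) < N := by rw [hN]; exact_mod_cast Nat.pos_of_ne_zero (by omega)
  have hNe : N ≠ 0 := ne_of_gt hn0
  set γ : ℝ := 1 - μ with hγdef
  set s : ℝ := ρ₁ ^ 2 with hsdef
  have hs0 : (0:ℝ) < s := by rw [hsdef]; positivity
  have hγ0 : (0:ℝ) ≤ γ := by rw [hγdef]; linarith
  set SC : ℝ := ∑ j : Fin n, Real.cos (θ j) with hSCdef
  have hSC : SC = N * ρ₁ := by rw [hρ₁]; field_simp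
  -- β value
  have hbe : ∀ j, ∑ k : Fin n, (1 - A j k) * Real.sin (θ k - θ j)
      = -(N * ρ₁ * Real.sin (θ j)) := by
    intro j
    have e : ∑ k : Fin n, (1 - A j k) * Real.sin (θ k - θ j)
        = (∑ k : Fin n, Real.sin (θ k - θ j)) - ∑ k : Fin n, A j k * Real.sin (θ k - θ j) := by
      rw [← Finset.sum_sub_distrib]
      exact Finset.sum_congr rfl fun k _ => by ring
    rw [e, heq j, sum_sin_sub θ (θ j), hsin0, ← hSCdef, hSC]
    ring
  -- R bounds
  have hR0 : ∀ j, (0:ℝ) ≤ ∑ k : Fin n, (1 - A j k) := by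
    intro j
    refine Finset.sum_nonneg fun k _ => ?_
    rcases h01 j k with h | h <;> rw [h] <;> norm_num
  have hRle : ∀ j, ∑ k : Fin n, (1 - A j k) ≤ γ * N := by
    intro j
    have e : ∑ k : Fin n, (1 - A j k) = N - ∑ k : Fin n, A j k := by
      rw [Finset.sum_sub_distrib, Finset.sum_const, Finset.card_univ, Fintype.card_fin,
        nsmul_eq_mul, mul_one, ← hN]
    have h2 := hconn j
    rw [e, hγdef]
    linarith only [h2]
  -- Cauchy–Schwarz facts
  have hEsq : ∀ j k, (1 - A j k) ^ 2 = 1 - A j k := by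
    intro j k; rcases h01 j k with h | h <;> rw [h] <;> norm_num
  have hCSa : ∀ j, (∑ k : Fin n, (1 - A j k) * Real.cos (θ k - θ j)) ^ 2
      + (∑ k : Fin n, (1 - A j k) * Real.sin (θ k - θ j)) ^ 2
      ≤ (∑ k : Fin n, (1 - A j k)) ^ 2 := by
    intro j
    have h1 := cs01 (fun k => 1 - A j k) (fun k => hEsq j k) (fun k => Real.cos (θ k - θ j))
    have h2 := cs01 (fun k => 1 - A j k) (fun k => hEsq j k) (fun k => Real.sin (θ k - θ j))
    have h3 : (∑ k : Fin n, (1 - A j k) * Real.cos (θ k - θ j) ^ 2)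
        + (∑ k : Fin n, (1 - A j k) * Real.sin (θ k - θ j) ^ 2)
        = ∑ k : Fin n, (1 - A j k) := by
      rw [← Finset.sum_add_distrib]
      refine Finset.sum_congr rfl fun k _ => ?_
      linear_combination (1 - A j k) * Real.sin_sq_add_cos_sq (θ k - θ j)
    have h4 := congrArg (fun t => (∑ k : Fin n, (1 - A j k)) * t) h3
    linarith only [h1, h2, h4]
  -- pointwise sin² bound
  have hxb : ∀ j, s * Real.sin (θ j) ^ 2 ≤ γ ^ 2 := by
    intro j
    have h1 := hCSa j
    rw [hbe j] at h1
    have h2 : (∑ k : Fin n, (1 - A j k)) ^ 2 ≤ (γ * N) ^ 2 := by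
      have := hR0 j; have := hRle j; nlinarith
    rw [hsdef]
    have h5 := sq_nonneg (∑ k : Fin n, (1 - A j k) * Real.cos (θ k - θ j))
    have h6 : ρ₁ ^ 2 * Real.sin (θ j) ^ 2 * N ^ 2 ≤ γ ^ 2 * N ^ 2 := by
      linarith only [h1, h2, h5]
    exact le_of_mul_le_mul_right h6 (by positivity)
  -- u function
  set u : Fin n → ℝ := fun j => Real.sqrt (γ ^ 2 - s * Real.sin (θ j) ^ 2) with hudef
  have hu0 : ∀ j, 0 ≤ u j := fun j => Real.sqrt_nonneg _
  have hu2 : ∀ j, u j ^ 2 = γ ^ 2 - s * Real.sin (θ j) ^ 2 := by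
    intro j
    rw [hudef]
    exact Real.sq_sqrt (by linarith [hxb j])
  -- -α ≤ N * u j
  have halle : ∀ j, -(∑ k : Fin n, (1 - A j k) * Real.cos (θ k - θ j)) ≤ N * u j := by
    intro j
    have h1 := hCSa j
    rw [hbe j] at h1
    have h2 : (∑ k : Fin n, (1 - A j k)) ^ 2 ≤ (γ * N) ^ 2 := by
      have := hR0 j; have := hRle j; nlinarith
    have h4 : (∑ k : Fin n, (1 - A j k) * Real.cos (θ k - θ j)) ^ 2 ≤ (N * u j) ^ 2 := by
      have e : (N * u j) ^ 2 = N ^ 2 * (γ ^ 2 - s * Real.sin (θ j) ^ 2) := by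
        rw [mul_pow, hu2 j]
      rw [e, hsdef]
      linarith only [h1, h2]
    have h5 := Real.sqrt_le_sqrt h4
    rw [Real.sqrt_sq_eq_abs, Real.sqrt_sq (by positivity : (0:ℝ) ≤ N * u j)] at h5
    linarith [neg_abs_le (∑ k : Fin n, (1 - A j k) * Real.cos (θ k - θ j))]
  -- Z bound
  have hZ0 : ∀ j, (0:ℝ) ≤ ∑ k : Fin n, (1 - A j k) * Real.sin (θ k - θ j) ^ 2 := by
    intro j
    refine Finset.sum_nonneg fun k _ => mul_nonneg ?_ (sq_nonneg _)
    rcases h01 j k with h | h <;> rw [h] <;> norm_num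
  have hZge : ∀ j, N * (s * Real.sin (θ j) ^ 2)
      ≤ γ * ∑ k : Fin n, (1 - A j k) * Real.sin (θ k - θ j) ^ 2 := by
    intro j
    have h1 := cs01 (fun k => 1 - A j k) (fun k => hEsq j k) (fun k => Real.sin (θ k - θ j))
    rw [hbe j] at h1
    have h2 : (∑ k : Fin n, (1 - A j k)) * (∑ k : Fin n, (1 - A j k) * Real.sin (θ k - θ j) ^ 2)
        ≤ (γ * N) * ∑ k : Fin n, (1 - A j k) * Real.sin (θ k - θ j) ^ 2 :=
      mul_le_mul_of_nonneg_right (hRle j) (hZ0 j)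
    rw [hsdef]
    have h3 : N * (N * (ρ₁ ^ 2 * Real.sin (θ j) ^ 2))
        ≤ N * (γ * ∑ k : Fin n, (1 - A j k) * Real.sin (θ k - θ j) ^ 2) := by
      linarith only [h1, h2]
    exact le_of_mul_le_mul_left h3 hn0
  -- per-j bound on E-part
  have h15 : ∀ j, γ * (∑ k : Fin n, (1 - A j k) * (Real.cos (θ k - θ j) ^ 2 - Real.cos (θ k - θ j)))
      ≤ γ ^ 2 * N - N * (s * Real.sin (θ j) ^ 2) + γ * (N * u j) := by
    intro j
    have hSj : (∑ k : Fin n, (1 - A j k) * (Real.cos (θ k - θ j) ^ 2 - Real.cos (θ k - θ j)))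
        = (∑ k : Fin n, (1 - A j k)) - (∑ k : Fin n, (1 - A j k) * Real.sin (θ k - θ j) ^ 2)
          - (∑ k : Fin n, (1 - A j k) * Real.cos (θ k - θ j)) := by
      rw [← Finset.sum_sub_distrib, ← Finset.sum_sub_distrib]
      refine Finset.sum_congr rfl fun k _ => ?_
      linear_combination (1 - A j k) * Real.sin_sq_add_cos_sq (θ k - θ j)
    rw [hSj]
    have p1 : γ * (∑ k : Fin n, (1 - A j k)) ≤ γ * (γ * N) :=
      mul_le_mul_of_nonneg_left (hRle j) hγ0
    have p2 := hZge j
    have p3 : γ * (-(∑ k : Fin n, (1 - A j k) * Real.cos (θ k - θ j))) ≤ γ * (N * u j) :=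
      mul_le_mul_of_nonneg_left (halle j) hγ0
    linarith only [p1, p2, p3]
  set Sx : ℝ := ∑ j : Fin n, Real.sin (θ j) ^ 2 with hSxdef
  set Usum : ℝ := ∑ j : Fin n, u j with hUsumdef
  have hSx0 : (0:ℝ) ≤ Sx := by
    rw [hSxdef]; exact Finset.sum_nonneg fun j _ => sq_nonneg _
  have hsSx : s * Sx ≤ N * γ ^ 2 := by
    have h1 : ∑ j : Fin n, (s * Real.sin (θ j) ^ 2) ≤ ∑ j : Fin n, (γ:ℝ) ^ 2 :=
      Finset.sum_le_sum fun j _ => hxb j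
    rw [← Finset.mul_sum, ← hSxdef, Finset.sum_const, Finset.card_univ, Fintype.card_fin,
      nsmul_eq_mul, ← hN] at h1
    linarith only [h1]
  -- sum of h15
  have h16 : γ * (∑ j : Fin n, ∑ k : Fin n,
        (1 - A j k) * (Real.cos (θ k - θ j) ^ 2 - Real.cos (θ k - θ j)))
      ≤ γ ^ 2 * N * N - N * s * Sx + γ * N * Usum := by
    have h1 : ∑ j : Fin n, (γ * (∑ k : Fin n,
          (1 - A j k) * (Real.cos (θ k - θ j) ^ 2 - Real.cos (θ k - θ j))))
        ≤ ∑ j : Fin n, (γ ^ 2 * N - N * (s * Real.sin (θ j) ^ 2) + γ * (N * u j)) :=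
      Finset.sum_le_sum fun j _ => h15 j
    have e1 : ∑ j : Fin n, (γ * (∑ k : Fin n,
          (1 - A j k) * (Real.cos (θ k - θ j) ^ 2 - Real.cos (θ k - θ j))))
        = γ * (∑ j : Fin n, ∑ k : Fin n,
          (1 - A j k) * (Real.cos (θ k - θ j) ^ 2 - Real.cos (θ k - θ j))) :=
      (Finset.mul_sum _ _ _).symm
    have e2 : ∑ j : Fin n, (γ ^ 2 * N - N * (s * Real.sin (θ j) ^ 2) + γ * (N * u j))
        = γ ^ 2 * N * N - N * s * Sx + γ * N * Usum := by
      rw [Finset.sum_add_distrib, Finset.sum_sub_distrib, Finset.sum_const, Finset.card_univ,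
        Fintype.card_fin, nsmul_eq_mul, ← hN]
      have e3 : ∑ j : Fin n, N * (s * Real.sin (θ j) ^ 2) = N * s * Sx := by
        rw [← Finset.mul_sum, ← Finset.mul_sum, ← hSxdef, mul_assoc]
      have e4 : ∑ j : Fin n, γ * (N * u j) = γ * N * Usum := by
        rw [← Finset.mul_sum, ← Finset.mul_sum, ← hUsumdef, mul_assoc]
      rw [e3, e4]; ring
    rw [e1, e2] at h1
    exact h1
  -- Usum bound
  set w : ℝ := Real.sqrt (γ ^ 2 - s * (Sx / N)) with hwdef
  have hw0 : (0:ℝ) ≤ w := Real.sqrt_nonneg _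
  have hwnn : (0:ℝ) ≤ γ ^ 2 - s * (Sx / N) := by
    rw [sub_nonneg, mul_div_assoc']
    exact (div_le_iff₀ hn0).mpr (by linarith)
  have hw2 : w ^ 2 = γ ^ 2 - s * (Sx / N) := by rw [hwdef]; exact Real.sq_sqrt hwnn
  have hUsum : Usum ≤ N * w := by
    have h1 : Usum ^ 2 ≤ N * ∑ j : Fin n, (u j) ^ 2 := by
      have := sq_sum_le_card_mul_sum_sq (s := (Finset.univ : Finset (Fin n))) (f := u)
      rw [Finset.card_univ, Fintype.card_fin, ← hN] at this
      rw [hUsumdef]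
      exact_mod_cast this
    have h2 : ∑ j : Fin n, (u j) ^ 2 = N * γ ^ 2 - s * Sx := by
      have e : ∑ j : Fin n, (u j) ^ 2 = ∑ j : Fin n, (γ ^ 2 - s * Real.sin (θ j) ^ 2) :=
        Finset.sum_congr rfl fun j _ => hu2 j
      rw [e, Finset.sum_sub_distrib, Finset.sum_const, Finset.card_univ, Fintype.card_fin,
        nsmul_eq_mul, ← hN, ← Finset.mul_sum, ← hSxdef]
    have h3 : Usum ^ 2 ≤ (N * w) ^ 2 := by
      have e : (N * w) ^ 2 = N * (N * γ ^ 2 - s * Sx) := by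
        rw [mul_pow, hw2]; field_simp
      rw [e]; rw [h2] at h1; exact h1
    have h4 := Real.sqrt_le_sqrt h3
    rw [Real.sqrt_sq_eq_abs, Real.sqrt_sq (by positivity : (0:ℝ) ≤ N * w)] at h4
    have h5 : (0:ℝ) ≤ Usum := by
      rw [hUsumdef]; exact Finset.sum_nonneg fun j _ => hu0 j
    calc Usum = |Usum| := (abs_of_nonneg h5).symm
    _ ≤ N * w := h4
  -- stability: A-part nonpositive
  have h18 : ∑ j : Fin n, ∑ k : Fin n,
      A j k * (Real.cos (θ k - θ j) ^ 2 - Real.cos (θ k - θ j)) ≤ 0 := by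
    have h1 : 0 ≤ ∑ j : Fin n, ∑ k : Fin n,
        A j k * Real.cos (θ k - θ j) * (Real.cos (θ j) - Real.cos (θ k)) ^ 2 :=
      hstab fun i => Real.cos (θ i)
    have h2 : 0 ≤ ∑ j : Fin n, ∑ k : Fin n,
        A j k * Real.cos (θ k - θ j) * (Real.sin (θ j) - Real.sin (θ k)) ^ 2 :=
      hstab fun i => Real.sin (θ i)
    have hkey : ∀ j k : Fin n,
        A j k * Real.cos (θ k - θ j) * (Real.cos (θ j) - Real.cos (θ k)) ^ 2
          + A j k * Real.cos (θ k - θ j) * (Real.sin (θ j) - Real.sin (θ k)) ^ 2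
        = (-2) * (A j k * (Real.cos (θ k - θ j) ^ 2 - Real.cos (θ k - θ j))) := by
      intro j k
      rw [Real.cos_sub]
      linear_combination (A j k * (Real.cos (θ k) * Real.cos (θ j)
          + Real.sin (θ k) * Real.sin (θ j))) * (Real.sin_sq_add_cos_sq (θ j))
        + (A j k * (Real.cos (θ k) * Real.cos (θ j)
          + Real.sin (θ k) * Real.sin (θ j))) * (Real.sin_sq_add_cos_sq (θ k))
    have e1 : ∑ j : Fin n, ∑ k : Fin n,
        (A j k * Real.cos (θ k - θ j) * (Real.cos (θ j) - Real.cos (θ k)) ^ 2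
          + A j k * Real.cos (θ k - θ j) * (Real.sin (θ j) - Real.sin (θ k)) ^ 2)
        = (-2) * ∑ j : Fin n, ∑ k : Fin n,
            A j k * (Real.cos (θ k - θ j) ^ 2 - Real.cos (θ k - θ j)) := by
      rw [Finset.mul_sum]
      refine Finset.sum_congr rfl fun j _ => ?_
      rw [Finset.mul_sum]
      exact Finset.sum_congr rfl fun k _ => hkey j k
    have e2 : ∑ j : Fin n, ∑ k : Fin n,
        (A j k * Real.cos (θ k - θ j) * (Real.cos (θ j) - Real.cos (θ k)) ^ 2
          + A j k * Real.cos (θ k - θ j) * (Real.sin (θ j) - Real.sin (θ k)) ^ 2)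
        = (∑ j : Fin n, ∑ k : Fin n,
            A j k * Real.cos (θ k - θ j) * (Real.cos (θ j) - Real.cos (θ k)) ^ 2)
          + ∑ j : Fin n, ∑ k : Fin n,
            A j k * Real.cos (θ k - θ j) * (Real.sin (θ j) - Real.sin (θ k)) ^ 2 := by
      rw [← Finset.sum_add_distrib]
      exact Finset.sum_congr rfl fun j _ => Finset.sum_add_distrib
    have h3 := add_nonneg h1 h2
    rw [e2] at e1
    linarith
  -- complex side
  set r : ℝ := ‖ρ₂‖ with hrdef
  have hnc : (n : ℂ) ≠ 0 := Nat.cast_ne_zero.mpr (by omega)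
  have hexp : ∀ j, Complex.exp (2 * Complex.I * (θ j : ℂ))
      = ((Real.cos (2 * θ j) : ℝ) : ℂ) + ((Real.sin (2 * θ j) : ℝ) : ℂ) * Complex.I := by
    intro j
    rw [show (2 * Complex.I * ((θ j : ℝ) : ℂ)) = ((2 * θ j : ℝ) : ℂ) * Complex.I by
      push_cast; ring, Complex.exp_mul_I, ← Complex.ofReal_cos, ← Complex.ofReal_sin]
  have hρ₂' : ρ₂ = (((∑ j : Fin n, Real.cos (2 * θ j)) / N : ℝ) : ℂ)
      + (((∑ j : Fin n, Real.sin (2 * θ j)) / N : ℝ) : ℂ) * Complex.I := by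
    rw [hρ₂, Finset.sum_congr rfl fun j _ => hexp j, Finset.sum_add_distrib, ← Finset.sum_mul]
    rw [hN]
    push_cast
    field_simp
  have hre : ρ₂.re = (∑ j : Fin n, Real.cos (2 * θ j)) / N := by
    rw [hρ₂']
    simp only [Complex.add_re, Complex.ofReal_re, Complex.mul_re, Complex.I_re,
      Complex.ofReal_im, Complex.I_im]
    ring
  have him : ρ₂.im = (∑ j : Fin n, Real.sin (2 * θ j)) / N := by
    rw [hρ₂']
    simp only [Complex.add_im, Complex.ofReal_im, Complex.mul_im, Complex.I_im,
      Complex.ofReal_re, Complex.I_re]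
    ring
  have hre' : N * ρ₂.re = ∑ j : Fin n, Real.cos (2 * θ j) := by rw [hre]; field_simp
  have him' : N * ρ₂.im = ∑ j : Fin n, Real.sin (2 * θ j) := by rw [him]; field_simp
  have hr2 : r ^ 2 = ρ₂.re ^ 2 + ρ₂.im ^ 2 := by
    rw [hrdef, Complex.sq_norm, Complex.normSq_apply]; ring
  have hr2N : (∑ j : Fin n, Real.cos (2 * θ j)) ^ 2 + (∑ j : Fin n, Real.sin (2 * θ j)) ^ 2
      = N ^ 2 * r ^ 2 := by
    rw [← hre', ← him', hr2]; ring
  -- double sum identities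
  have hI1 : ∑ j : Fin n, ∑ k : Fin n, Real.cos (θ k - θ j) = N ^ 2 * s := by
    rw [sum_sum_cos_sub θ, hsin0, ← hSCdef, hSC, hsdef]; ring
  have hI2 : ∑ j : Fin n, ∑ k : Fin n, Real.cos (2 * θ k - 2 * θ j)
      = (∑ j : Fin n, Real.cos (2 * θ j)) ^ 2 + (∑ j : Fin n, Real.sin (2 * θ j)) ^ 2 :=
    sum_sum_cos_sub (fun j => 2 * θ j)
  have hI3 : ∑ j : Fin n, ∑ k : Fin n, Real.cos (θ k - θ j) ^ 2
      = (N ^ 2 + N ^ 2 * r ^ 2) / 2 := by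
    have e0 : ∀ j k : Fin n, Real.cos (θ k - θ j) ^ 2
        = 1 / 2 + Real.cos (2 * θ k - 2 * θ j) / 2 := by
      intro j k
      rw [Real.cos_sq, show 2 * (θ k - θ j) = 2 * θ k - 2 * θ j from by ring]
    rw [Finset.sum_congr rfl fun j _ => Finset.sum_congr rfl fun k _ => e0 j k]
    simp only [Finset.sum_add_distrib, Finset.sum_const, Finset.card_univ, Fintype.card_fin,
      nsmul_eq_mul, ← Finset.sum_div]
    rw [hI2, hr2N, ← hN]
    ring
  have hW : ∑ j : Fin n, ∑ k : Fin n,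
      (Real.cos (θ k - θ j) ^ 2 - Real.cos (θ k - θ j))
      = N ^ 2 * (1 + r ^ 2 - 2 * s) / 2 := by
    simp only [Finset.sum_sub_distrib]
    rw [hI3, hI1]
    ring
  -- split W into A and E parts, get hT
  have hsplitW : ∑ j : Fin n, ∑ k : Fin n,
        (Real.cos (θ k - θ j) ^ 2 - Real.cos (θ k - θ j))
      = (∑ j : Fin n, ∑ k : Fin n, A j k * (Real.cos (θ k - θ j) ^ 2 - Real.cos (θ k - θ j)))
        + ∑ j : Fin n, ∑ k : Fin n,
            (1 - A j k) * (Real.cos (θ k - θ j) ^ 2 - Real.cos (θ k - θ j)) := by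
    rw [← Finset.sum_add_distrib]
    refine Finset.sum_congr rfl fun j _ => ?_
    rw [← Finset.sum_add_distrib]
    exact Finset.sum_congr rfl fun k _ => by ring
  have hbig : γ * (N ^ 2 * (1 + r ^ 2 - 2 * s) / 2)
      ≤ γ ^ 2 * N * N - N * s * Sx + γ * N * (N * w) := by
    have p1 : γ * (∑ j : Fin n, ∑ k : Fin n,
        A j k * (Real.cos (θ k - θ j) ^ 2 - Real.cos (θ k - θ j))) ≤ 0 := by
      have := mul_le_mul_of_nonneg_left h18 hγ0
      simpa using this
    have p2 : γ * N * Usum ≤ γ * N * (N * w) :=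
      mul_le_mul_of_nonneg_left hUsum (by positivity)
    have e1 : γ * (N ^ 2 * (1 + r ^ 2 - 2 * s) / 2)
        = γ * (∑ j : Fin n, ∑ k : Fin n, A j k * (Real.cos (θ k - θ j) ^ 2 - Real.cos (θ k - θ j)))
          + γ * (∑ j : Fin n, ∑ k : Fin n,
              (1 - A j k) * (Real.cos (θ k - θ j) ^ 2 - Real.cos (θ k - θ j))) := by
      rw [← mul_add, ← hsplitW, hW]
    rw [e1]
    linarith only [p1, h16, p2]
  have hT : γ * (1 + r ^ 2 - 2 * s) ≤ 2 * (γ ^ 2 - s * (Sx / N) + γ * w) := by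
    have e2 : γ ^ 2 * N * N - N * s * Sx + γ * N * (N * w)
        = N ^ 2 * (γ ^ 2 - s * (Sx / N) + γ * w) := by
      field_simp
    have e1 : γ * (N ^ 2 * (1 + r ^ 2 - 2 * s) / 2)
        = N ^ 2 * (γ * (1 + r ^ 2 - 2 * s) / 2) := by ring
    rw [e1, e2] at hbig
    have h3 := le_of_mul_le_mul_left hbig (by positivity : (0:ℝ) < N ^ 2)
    linarith only [h3]
  -- re of ρ₂ in terms of Sx
  have hSC2val : ∑ j : Fin n, Real.cos (2 * θ j) = N - 2 * Sx := by
    have e : ∀ t : ℝ, Real.cos (2 * t) = 1 - 2 * Real.sin t ^ 2 := by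
      intro t
      rw [Real.cos_two_mul]
      linear_combination 2 * Real.sin_sq_add_cos_sq t
    rw [Finset.sum_congr rfl fun j _ => e (θ j), Finset.sum_sub_distrib, Finset.sum_const,
      Finset.card_univ, Fintype.card_fin, nsmul_eq_mul, mul_one, ← hN, ← Finset.mul_sum,
      ← hSxdef]
  have hrre : 1 - 2 * (Sx / N) ≤ r := by
    have h := Complex.re_le_norm ρ₂
    rw [hre, ← hrdef] at h
    have e : (∑ j : Fin n, Real.cos (2 * θ j)) / N = 1 - 2 * (Sx / N) := by
      rw [hSC2val]
      field_simp
    rw [e] at h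
    exact h
  -- endgame
  by_cases hμeq : μ = 1
  · -- complete graph case
    have hγz : γ = 0 := by rw [hγdef, hμeq]; ring
    have hx₀z : x₀ = 0 := by
      have h1 : γ ^ 2 / s = 0 := by rw [hγz]; simp
      have h2 : x₀ ≤ γ ^ 2 / s := le_trans hx₀le (min_le_right _ _)
      rw [h1] at h2
      exact le_antisymm h2 hx₀0
    have hSxz : Sx = 0 := by
      have h1 : ∀ j, Real.sin (θ j) ^ 2 = 0 := by
        intro j
        have h2 := hxb j
        rw [hγz] at h2
        have h3 : s * Real.sin (θ j) ^ 2 = 0 :=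
          le_antisymm (by linarith only [h2]) (by positivity)
        exact (mul_eq_zero.mp h3).resolve_left (ne_of_gt hs0)
      rw [hSxdef]
      exact Finset.sum_eq_zero fun j _ => h1 j
    have hr1 : (1:ℝ) ≤ r := by
      have h := hrre
      rw [hSxz] at h
      simpa using h
    rw [ge_iff_le, hγz, hx₀z]
    have hsq0 : Real.sqrt ((0:ℝ) ^ 2 - s * 0) = 0 := by norm_num
    rw [hsq0]
    norm_num
    linarith only [hr1]
  · -- main case
    have hγpos : 0 < γ := by
      rw [hγdef]
      have h1 := lt_of_le_of_ne hμ1 hμeq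
      linarith only [h1]
    set U0 : ℝ := Real.sqrt (γ ^ 2 - s * x₀) with hU0def
    have hU00 : 0 ≤ U0 := Real.sqrt_nonneg _
    have hsx₀ : s * x₀ ≤ γ ^ 2 := by
      have h1 : x₀ ≤ γ ^ 2 / s := le_trans hx₀le (min_le_right _ _)
      have h2 := (le_div_iff₀ hs0).mp h1
      linarith only [h2]
    have hU02 : U0 ^ 2 = γ ^ 2 - s * x₀ := by
      rw [hU0def]; exact Real.sq_sqrt (by linarith only [hsx₀])
    have hwγ : w ≤ γ := by
      rw [hwdef]
      have h1 : γ ^ 2 - s * (Sx / N) ≤ γ ^ 2 := by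
        have h0 : 0 ≤ s * (Sx / N) := by positivity
        linarith only [h0]
      calc Real.sqrt (γ ^ 2 - s * (Sx / N)) ≤ Real.sqrt (γ ^ 2) := Real.sqrt_le_sqrt h1
      _ = γ := Real.sqrt_sq hγ0
    have key : U0 * w ^ 2 + U0 * γ * w ≤ γ * U0 ^ 2 + γ * w ^ 2 := by
      have k1 : 0 ≤ γ * (U0 - w) ^ 2 := mul_nonneg hγ0 (sq_nonneg _)
      have k2 : 0 ≤ U0 * w * (γ - w) :=
        mul_nonneg (mul_nonneg hU00 hw0) (sub_nonneg.mpr hwγ)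
      linarith only [k1, k2]
    have c1 : U0 * (γ * (1 + r ^ 2 - 2 * s)) ≤ U0 * (2 * (γ ^ 2 - s * (Sx / N) + γ * w)) :=
      mul_le_mul_of_nonneg_left hT hU00
    have c2 : U0 * (2 * (γ ^ 2 - s * (Sx / N) + γ * w)) = 2 * (U0 * w ^ 2) + 2 * (U0 * γ * w) := by
      rw [← hw2]; ring
    have c4 : 2 * (γ * U0 ^ 2) + 2 * (γ * w ^ 2)
        = γ * (4 * γ ^ 2 - 2 * (s * x₀) - 2 * (s * (Sx / N))) := by
      rw [hU02, hw2]; ring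
    have c5 : γ * (U0 * (1 + r ^ 2 - 2 * s))
        ≤ γ * (4 * γ ^ 2 - 2 * (s * x₀) - 2 * (s * (Sx / N))) := by
      calc γ * (U0 * (1 + r ^ 2 - 2 * s)) = U0 * (γ * (1 + r ^ 2 - 2 * s)) := by ring
      _ ≤ U0 * (2 * (γ ^ 2 - s * (Sx / N) + γ * w)) := c1
      _ = 2 * (U0 * w ^ 2) + 2 * (U0 * γ * w) := c2
      _ ≤ 2 * (γ * U0 ^ 2) + 2 * (γ * w ^ 2) := by linarith only [key]
      _ = γ * (4 * γ ^ 2 - 2 * (s * x₀) - 2 * (s * (Sx / N))) := c4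
    have c6 : U0 * (1 + r ^ 2 - 2 * s) ≤ 4 * γ ^ 2 - 2 * (s * x₀) - 2 * (s * (Sx / N)) :=
      le_of_mul_le_mul_left c5 hγpos
    have c7 : U0 / s * (1 + r ^ 2 - 2 * s) ≤ 4 * γ ^ 2 / s - 2 * x₀ - 2 * (Sx / N) := by
      have h1 : U0 * (1 + r ^ 2 - 2 * s) / s
          ≤ (4 * γ ^ 2 - 2 * (s * x₀) - 2 * (s * (Sx / N))) / s :=
        div_le_div_of_nonneg_right c6 hs0.le
      have e1 : U0 / s * (1 + r ^ 2 - 2 * s) = U0 * (1 + r ^ 2 - 2 * s) / s := by ring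
      have e2 : (4 * γ ^ 2 - 2 * (s * x₀) - 2 * (s * (Sx / N))) / s
          = 4 * γ ^ 2 / s - 2 * x₀ - 2 * (Sx / N) := by
        field_simp
      rw [e1, ← e2]
      exact h1
    rw [ge_iff_le]
    linarith only [hrre, c7]
end

section
/- Suppose the network has connectivity at least μ̃ with μ̃ > 3/4, and θ is a stable equilibrium with ρ₁² ≤ 1/2, where ρ₁ = (1/n)·∑_j cos(θ_j). Then |ρ₂| ≥ 1 − 2(1 − μ̃)²/ρ₁² + (1 − 2ρ₁²)²/(8ρ₁²), where ρ₂ = (1/n)·∑_j exp(2iθ_j). -/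
set_option maxHeartbeats 800000 in
private lemma core_ineq (u δ R S C : ℝ) (h1 : u*S + (u-C)^2 ≤ δ^2)
    (h2 : (1+R^2)/2 - δ ≤ C) (h3 : 1 - 2*S ≤ R) (h4 : 0 ≤ δ) (h5 : δ < 1/4)
    (h6 : 0 < u) (h7 : u ≤ 1/2) (h8 : 0 ≤ R) (h9 : 0 ≤ S) :
    (1+2*u)^2 ≤ 16*δ^2 + 8*u*R := by
  have hCu : C ≤ u + δ := by nlinarith [mul_nonneg h6.le h9]
  rcases le_or_gt 1 R with hR1 | hR1
  · exfalso; nlinarith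
  · rcases le_or_gt ((1+R^2)/2) (u + δ) with hw | hw
    · exfalso
      have hSR : (1-R)/2 ≤ S := by linarith
      have hd2 : u*(1-R)/2 ≤ δ^2 := by
        have : u*((1-R)/2) ≤ u*S := mul_le_mul_of_nonneg_left hSR h6.le
        nlinarith [sq_nonneg (u-C)]
      nlinarith [sq_nonneg (R-1), sq_nonneg (2*δ-1+R), sq_nonneg (2*δ+1-R),
        mul_pos h6 (by linarith : (0:ℝ) < 1-R)]
    · have hw0 : 0 < (1+R^2)/2 - δ - u := by linarith
      have hCw : (1+R^2)/2 - δ - u ≤ C - u := by linarith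
      have hB : u*(1-R)/2 + ((1+R^2)/2 - δ - u)^2 ≤ δ^2 := by
        have hSR : (1-R)/2 ≤ S := by linarith
        have e1 : u*((1-R)/2) ≤ u*S := mul_le_mul_of_nonneg_left hSR h6.le
        have e2 : ((1+R^2)/2 - δ - u)^2 ≤ (C-u)^2 := by
          apply sq_le_sq' <;> nlinarith
        nlinarith [sq_nonneg (u-C)]
      rcases le_or_gt 0 (2*R^2+1-4*δ-2*u) with hb1 | hb1
      · nlinarith [mul_nonneg hb1 (by linarith : (0:ℝ) ≤ 2*R^2+3-4*δ-6*u)]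
      · exfalso
        have hR2 : R^2 < 2*δ := by linarith
        have hR34 : R < 3/4 := by nlinarith
        have hy4 : 1/4 < 1 - R := by linarith
        have hkey : (1-R)*(1+R^2)/4 + (((1+R^2)/2 - δ - u) - (1-R)/4)^2 ≤ (δ + (1-R)/4)^2 := by
          nlinarith [hB]
        have g1 : (1-R)*(1+R^2)/4 ≤ (δ + (1-R)/4)^2 := by
          nlinarith [sq_nonneg (((1+R^2)/2 - δ - u) - (1-R)/4)]
        have g2 : (δ + (1-R)/4)^2 < ((1 + (1-R))/4)^2 := by
          nlinarith [mul_pos (show (0:ℝ) < 1/4 - δ by linarith) (show (0:ℝ) < δ + (1-R)/4 + (1+(1-R))/4 by nlinarith)]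
        have g3 : ((1 + (1-R))/4)^2 ≤ (1-R)*(1+R^2)/4 := by
          nlinarith [mul_nonneg (sq_nonneg ((1-R)-1)) (show (0:ℝ) ≤ 4*(1-R)-1 by linarith)]
        linarith

set_option maxHeartbeats 1600000 in
/-- If the network has connectivity at least `μ̃ > 3/4` and `θ` is a stable equilibrium with
`ρ₁² ≤ 1/2`, then `|ρ₂| ≥ 1 − 2(1 − μ̃)²/ρ₁² + (1 − 2ρ₁²)²/(8ρ₁²)`. -/
theorem stable_equilibrium_rho2_optimized_lower_bound
    (n : ℕ) (hn : 1 ≤ n) (A : Fin n → Fin n → ℝ) (θ : Fin n → ℝ) (μ : ℝ)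
    (hμ0 : 3 / 4 < μ) (hμ1 : μ ≤ 1)
    (hsym : ∀ j k, A j k = A k j)
    (h01 : ∀ j k, A j k = 0 ∨ A j k = 1)
    (hdiag : ∀ j, A j j = 1)
    (hconn : ∀ j, μ * n ≤ ∑ k : Fin n, A j k)
    (heq : ∀ j, ∑ k : Fin n, A j k * Real.sin (θ k - θ j) = 0)
    (hstab : ∀ v : Fin n → ℝ,
      0 ≤ ∑ j : Fin n, ∑ k : Fin n,
            A j k * Real.cos (θ k - θ j) * (v j - v k) ^ 2)
    (hsin0 : ∑ j : Fin n, Real.sin (θ j) = 0)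
    (ρ₁ : ℝ) (hρ₁ : ρ₁ = (1 / (n : ℝ)) * ∑ j : Fin n, Real.cos (θ j))
    (hρ₁nonneg : 0 ≤ ρ₁) (hρ₁small : ρ₁ ^ 2 ≤ 1 / 2)
    (ρ₂ : ℂ) (hρ₂ : ρ₂ = (1 / (n : ℂ)) *
        ∑ j : Fin n, Complex.exp (2 * Complex.I * (θ j : ℂ))) :
    ‖ρ₂‖ ≥ 1 - 2 * (1 - μ) ^ 2 / ρ₁ ^ 2
      + (1 - 2 * ρ₁ ^ 2) ^ 2 / (8 * ρ₁ ^ 2) := by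
  classical
  set N : ℝ := (n : ℝ) with hNdef
  have hN : (0:ℝ) < N := by
    rw [hNdef]; exact_mod_cast Nat.lt_of_lt_of_le Nat.zero_lt_one hn
  have hNne : N ≠ 0 := ne_of_gt hN
  have hA0 : ∀ j k, 0 ≤ A j k := by
    intro j k; rcases h01 j k with h | h <;> simp [h]
  have hA1 : ∀ j k, A j k ≤ 1 := by
    intro j k; rcases h01 j k with h | h <;> simp [h]
  have hsumcos : ∑ j : Fin n, Real.cos (θ j) = N * ρ₁ := by
    rw [hρ₁]; field_simp
  set S : ℝ := ∑ j : Fin n, Real.sin (θ j) ^ 2 with hSdef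
  set Cs : ℝ := ∑ j : Fin n, ∑ k : Fin n, A j k * Real.cos (θ k - θ j) with hCsdef
  set P2 : ℝ := ∑ j : Fin n, Real.cos (2 * θ j) with hP2def
  set Q2 : ℝ := ∑ j : Fin n, Real.sin (2 * θ j) with hQ2def
  set R : ℝ := ‖ρ₂‖ with hRdef
  set δ : ℝ := 1 - μ with hδdef
  have hδ0 : 0 ≤ δ := by rw [hδdef]; linarith
  have hδ4 : δ < 1/4 := by rw [hδdef]; linarith
  have hR0 : 0 ≤ R := norm_nonneg _
  have hS0 : 0 ≤ S := Finset.sum_nonneg fun j _ => sq_nonneg _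
  -- row sums of cos and sin over all k
  have hrowcos : ∀ j, ∑ k : Fin n, Real.cos (θ k - θ j)
      = N * ρ₁ * Real.cos (θ j) := by
    intro j
    rw [Finset.sum_congr rfl fun k _ => Real.cos_sub (θ k) (θ j), Finset.sum_add_distrib,
      ← Finset.sum_mul, ← Finset.sum_mul, hsumcos, hsin0]
    ring
  have hrowsin : ∀ j, ∑ k : Fin n, Real.sin (θ k - θ j)
      = -(N * ρ₁ * Real.sin (θ j)) := by
    intro j
    rw [Finset.sum_congr rfl fun k _ => Real.sin_sub (θ k) (θ j), Finset.sum_sub_distrib,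
      ← Finset.sum_mul, ← Finset.sum_mul, hsumcos, hsin0]
    ring
  have hXj : ∀ j, ∑ k : Fin n, (1 - A j k) * Real.cos (θ k - θ j)
      = N * ρ₁ * Real.cos (θ j) - ∑ k : Fin n, A j k * Real.cos (θ k - θ j) := by
    intro j
    rw [Finset.sum_congr rfl fun k _ =>
      (by ring : (1 - A j k) * Real.cos (θ k - θ j)
        = Real.cos (θ k - θ j) - A j k * Real.cos (θ k - θ j)),
      Finset.sum_sub_distrib, hrowcos]
  have hYj : ∀ j, ∑ k : Fin n, (1 - A j k) * Real.sin (θ k - θ j)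
      = -(N * ρ₁ * Real.sin (θ j)) := by
    intro j
    rw [Finset.sum_congr rfl fun k _ =>
      (by ring : (1 - A j k) * Real.sin (θ k - θ j)
        = Real.sin (θ k - θ j) - A j k * Real.sin (θ k - θ j)),
      Finset.sum_sub_distrib, hrowsin, heq j, sub_zero]
  have hGram : ∀ j, (∑ k : Fin n, (1 - A j k) * Real.cos (θ k - θ j))^2
      + (∑ k : Fin n, (1 - A j k) * Real.sin (θ k - θ j))^2
      ≤ (∑ k : Fin n, (1 - A j k))^2 := by
    intro j
    have expand : ∀ f : Fin n → ℝ, (∑ k : Fin n, f k)^2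
        = ∑ k : Fin n, ∑ l : Fin n, f k * f l := by
      intro f; rw [sq, Finset.sum_mul_sum]
    rw [expand, expand, expand, ← Finset.sum_add_distrib]
    refine Finset.sum_le_sum fun k _ => ?_
    rw [← Finset.sum_add_distrib]
    refine Finset.sum_le_sum fun l _ => ?_
    have hb : 0 ≤ (1 - A j k) * (1 - A j l) :=
      mul_nonneg (by linarith [hA1 j k]) (by linarith [hA1 j l])
    have hcos : Real.cos ((θ k - θ j) - (θ l - θ j))
        = Real.cos (θ k - θ j) * Real.cos (θ l - θ j)
          + Real.sin (θ k - θ j) * Real.sin (θ l - θ j) := Real.cos_sub _ _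
    have hle : Real.cos ((θ k - θ j) - (θ l - θ j)) ≤ 1 := Real.cos_le_one _
    calc (1 - A j k) * Real.cos (θ k - θ j) * ((1 - A j l) * Real.cos (θ l - θ j))
          + (1 - A j k) * Real.sin (θ k - θ j) * ((1 - A j l) * Real.sin (θ l - θ j))
        = (1 - A j k) * (1 - A j l) * Real.cos ((θ k - θ j) - (θ l - θ j)) := by
          rw [hcos]; ring
      _ ≤ (1 - A j k) * (1 - A j l) * 1 := mul_le_mul_of_nonneg_left hle hb
      _ = (1 - A j k) * (1 - A j l) := mul_one _
  have hm0 : ∀ j, 0 ≤ ∑ k : Fin n, (1 - A j k) := by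
    intro j; exact Finset.sum_nonneg fun k _ => by linarith [hA1 j k]
  have hmle : ∀ j, ∑ k : Fin n, (1 - A j k) ≤ δ * N := by
    intro j
    have h := hconn j
    rw [Finset.sum_sub_distrib, Finset.sum_const, Finset.card_univ, Fintype.card_fin,
      nsmul_eq_mul, mul_one]
    have e : δ * N = N - μ * N := by rw [hδdef]; ring
    rw [e, ← hNdef]
    linarith
  have hkeyj : ∀ j, (N*ρ₁*Real.cos (θ j) - ∑ k : Fin n, A j k * Real.cos (θ k - θ j))^2
      + (N*ρ₁*Real.sin (θ j))^2 ≤ (δ*N)^2 := by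
    intro j
    have h1 := hGram j
    rw [hXj j, hYj j, neg_sq] at h1
    have h2 : (∑ k : Fin n, (1 - A j k))^2 ≤ (δ*N)^2 := by
      have h0 := hm0 j
      have h3 := hmle j
      have h4 : 0 ≤ δ*N := mul_nonneg hδ0 hN.le
      nlinarith [mul_nonneg (sub_nonneg.2 h3) (add_nonneg h4 h0)]
    linarith
  have hsumkey : N^2*ρ₁^2*S + (∑ j : Fin n,
      (N*ρ₁*Real.cos (θ j) - ∑ k : Fin n, A j k * Real.cos (θ k - θ j))^2)
      ≤ δ^2*N^2*N := by
    have h := Finset.sum_le_sum (fun j (_ : j ∈ Finset.univ) => hkeyj j)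
    rw [Finset.sum_add_distrib, Finset.sum_const, Finset.card_univ, Fintype.card_fin,
      nsmul_eq_mul] at h
    have e : ∑ j : Fin n, (N*ρ₁*Real.sin (θ j))^2 = N^2*ρ₁^2*S := by
      rw [hSdef, Finset.mul_sum]
      exact Finset.sum_congr rfl fun j _ => by ring
    rw [e, ← hNdef] at h
    linarith [h]
  have hCS : (N^2*ρ₁^2 - Cs)^2 ≤ N * ∑ j : Fin n,
      (N*ρ₁*Real.cos (θ j) - ∑ k : Fin n, A j k * Real.cos (θ k - θ j))^2 := by
    have h := sq_sum_le_card_mul_sum_sq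
      (s := (Finset.univ : Finset (Fin n)))
      (f := fun j => N*ρ₁*Real.cos (θ j) - ∑ k : Fin n, A j k * Real.cos (θ k - θ j))
    have e : ∑ j : Fin n, (N*ρ₁*Real.cos (θ j)
        - ∑ k : Fin n, A j k * Real.cos (θ k - θ j)) = N^2*ρ₁^2 - Cs := by
      rw [Finset.sum_sub_distrib, ← Finset.mul_sum, hsumcos, hCsdef]; ring
    rw [e, Finset.card_univ, Fintype.card_fin, ← hNdef] at h
    exact h
  have hi : ρ₁^2*(S/N) + (ρ₁^2 - Cs/N^2)^2 ≤ δ^2 := by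
    have hN4 : (0:ℝ) < N^4 := by positivity
    rw [← mul_le_mul_iff_right₀ hN4]
    have e : N^4 * (ρ₁^2*(S/N) + (ρ₁^2 - Cs/N^2)^2)
        = N^3*ρ₁^2*S + (N^2*ρ₁^2 - Cs)^2 := by field_simp
    rw [e]
    have h1 : N * (N^2*ρ₁^2*S + (∑ j : Fin n,
        (N*ρ₁*Real.cos (θ j) - ∑ k : Fin n, A j k * Real.cos (θ k - θ j))^2))
        ≤ N * (δ^2*N^2*N) := mul_le_mul_of_nonneg_left hsumkey hN.le
    linarith [hCS, h1]
  -- stability inequality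
  have hstab2 : ∑ j : Fin n, ∑ k : Fin n, A j k * Real.cos (θ k - θ j)^2 ≤ Cs := by
    have h1 := hstab (fun j => Real.sin (θ j))
    have h2 := hstab (fun j => Real.cos (θ j))
    have hpt : ∀ j k : Fin n,
        A j k * Real.cos (θ k - θ j) * (Real.sin (θ j) - Real.sin (θ k))^2
        + A j k * Real.cos (θ k - θ j) * (Real.cos (θ j) - Real.cos (θ k))^2
        = 2*(A j k * Real.cos (θ k - θ j)) - 2*(A j k * Real.cos (θ k - θ j)^2) := by
      intro j k
      have hc : Real.cos (θ k - θ j)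
          = Real.cos (θ k) * Real.cos (θ j) + Real.sin (θ k) * Real.sin (θ j) :=
        Real.cos_sub _ _
      have p1 : Real.sin (θ j)^2 + Real.cos (θ j)^2 = 1 := Real.sin_sq_add_cos_sq _
      have p2 : Real.sin (θ k)^2 + Real.cos (θ k)^2 = 1 := Real.sin_sq_add_cos_sq _
      linear_combination (A j k * Real.cos (θ k - θ j)) * p1
        + (A j k * Real.cos (θ k - θ j)) * p2
        + (2 * A j k * Real.cos (θ k - θ j)) * hc
    have h12 := add_nonneg h1 h2
    rw [← Finset.sum_add_distrib] at h12
    rw [Finset.sum_congr rfl fun j _ => (Finset.sum_add_distrib).symm] at h12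
    rw [Finset.sum_congr rfl fun j _ => Finset.sum_congr rfl fun k _ => hpt j k] at h12
    rw [Finset.sum_congr rfl fun j _ => Finset.sum_sub_distrib _ _, Finset.sum_sub_distrib] at h12
    rw [Finset.sum_congr rfl fun j _ => (Finset.mul_sum _ _ _).symm,
      Finset.sum_congr rfl fun j _ => (Finset.mul_sum _ _ _).symm,
      (Finset.mul_sum _ _ _).symm, (Finset.mul_sum _ _ _).symm, ← hCsdef] at h12
    linarith
  have hall : ∑ j : Fin n, ∑ k : Fin n, Real.cos (θ k - θ j)^2
      = (N^2 + P2^2 + Q2^2)/2 := by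
    have key : ∑ j : Fin n, ∑ k : Fin n, Real.cos (2*θ k - 2*θ j) = P2^2 + Q2^2 := by
      have hrow : ∀ j, ∑ k : Fin n, Real.cos (2*θ k - 2*θ j)
          = P2 * Real.cos (2*θ j) + Q2 * Real.sin (2*θ j) := by
        intro j
        rw [Finset.sum_congr rfl fun k _ => Real.cos_sub (2*θ k) (2*θ j),
          Finset.sum_add_distrib, ← Finset.sum_mul, ← Finset.sum_mul, ← hP2def, ← hQ2def]
      rw [Finset.sum_congr rfl fun j _ => hrow j, Finset.sum_add_distrib,
        ← Finset.mul_sum, ← Finset.mul_sum, ← hP2def, ← hQ2def]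
      ring
    have e : ∀ j k : Fin n, Real.cos (θ k - θ j)^2 = 1/2 + Real.cos (2*θ k - 2*θ j)/2 := by
      intro j k; rw [Real.cos_sq, mul_sub]
    calc ∑ j : Fin n, ∑ k : Fin n, Real.cos (θ k - θ j)^2
        = ∑ j : Fin n, ∑ k : Fin n, (1/2 + Real.cos (2*θ k - 2*θ j)/2) :=
          Finset.sum_congr rfl fun j _ => Finset.sum_congr rfl fun k _ => e j k
      _ = ∑ j : Fin n, (N*(1/2) + (∑ k : Fin n, Real.cos (2*θ k - 2*θ j))/2) := by
          refine Finset.sum_congr rfl fun j _ => ?_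
          rw [Finset.sum_add_distrib, Finset.sum_const, Finset.card_univ, Fintype.card_fin,
            nsmul_eq_mul, ← Finset.sum_div, ← hNdef]
      _ = N*(N*(1/2)) + (∑ j : Fin n, ∑ k : Fin n, Real.cos (2*θ k - 2*θ j))/2 := by
          rw [Finset.sum_add_distrib, Finset.sum_const, Finset.card_univ, Fintype.card_fin,
            nsmul_eq_mul, ← hNdef, ← Finset.sum_div]
      _ = N*(N*(1/2)) + (P2^2+Q2^2)/2 := by rw [key]
      _ = (N^2 + P2^2 + Q2^2)/2 := by ring
  have hmiss : ∑ j : Fin n, ∑ k : Fin n, (1 - A j k) * Real.cos (θ k - θ j)^2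
      ≤ δ * N^2 := by
    have pt : ∀ j k : Fin n, (1 - A j k) * Real.cos (θ k - θ j)^2 ≤ (1 - A j k) := by
      intro j k
      have hb : 0 ≤ 1 - A j k := by linarith [hA1 j k]
      nlinarith [Real.cos_sq_le_one (θ k - θ j)]
    calc ∑ j : Fin n, ∑ k : Fin n, (1 - A j k) * Real.cos (θ k - θ j)^2
        ≤ ∑ j : Fin n, ∑ k : Fin n, (1 - A j k) :=
          Finset.sum_le_sum fun j _ => Finset.sum_le_sum fun k _ => pt j k
      _ ≤ ∑ j : Fin n, δ*N := Finset.sum_le_sum fun j _ => hmle j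
      _ = N*(δ*N) := by
          rw [Finset.sum_const, Finset.card_univ, Fintype.card_fin, nsmul_eq_mul, ← hNdef]
      _ = δ*N^2 := by ring
  have hCslow : (N^2 + P2^2 + Q2^2)/2 - δ*N^2 ≤ Cs := by
    have e : ∑ j : Fin n, ∑ k : Fin n, A j k * Real.cos (θ k - θ j)^2
        = (∑ j : Fin n, ∑ k : Fin n, Real.cos (θ k - θ j)^2)
          - ∑ j : Fin n, ∑ k : Fin n, (1 - A j k) * Real.cos (θ k - θ j)^2 := by
      rw [← Finset.sum_sub_distrib]
      refine Finset.sum_congr rfl fun j _ => ?_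
      rw [← Finset.sum_sub_distrib]
      exact Finset.sum_congr rfl fun k _ => by ring
    have h := hstab2
    rw [e, hall] at h
    exact le_trans (sub_le_sub_left hmiss _) h
  -- complex computations
  have hz : ∀ x : ℝ, Complex.exp (2*Complex.I*(x:ℂ))
      = ((Real.cos (2*x) : ℝ) : ℂ) + ((Real.sin (2*x) : ℝ) : ℂ) * Complex.I := by
    intro x
    rw [show (2*Complex.I*(x:ℂ)) = (((2*x : ℝ) : ℂ)) * Complex.I by push_cast; ring,
      Complex.exp_mul_I, Complex.ofReal_cos, Complex.ofReal_sin]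
  have hnCne : (n : ℂ) ≠ 0 := Nat.cast_ne_zero.mpr (by omega)
  have hρ₂' : ρ₂ = ((P2/N : ℝ) : ℂ) + ((Q2/N : ℝ) : ℂ) * Complex.I := by
    rw [hρ₂, Finset.sum_congr rfl fun j _ => hz (θ j), Finset.sum_add_distrib,
      ← Finset.sum_mul]
    rw [← Complex.ofReal_sum, ← Complex.ofReal_sum, ← hP2def, ← hQ2def]
    rw [hNdef]
    push_cast
    field_simp
  have hre : ρ₂.re = P2/N := by
    rw [hρ₂']; simp
  have him : ρ₂.im = Q2/N := by
    rw [hρ₂']; simp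
  have hRsq : N^2 * R^2 = P2^2 + Q2^2 := by
    have h := Complex.sq_norm ρ₂
    rw [Complex.normSq_apply, hre, him] at h
    rw [hRdef, h]
    field_simp
  have hii : (1 + R^2)/2 - δ ≤ Cs/N^2 := by
    have hN2 : (0:ℝ) < N^2 := by positivity
    rw [le_div_iff₀ hN2]
    linarith [hCslow, hRsq]
  have hP2S : P2 = N - 2*S := by
    have e : ∀ x : ℝ, Real.cos (2*x) = 1 - 2*Real.sin x^2 := fun x => by
      rw [Real.cos_two_mul', Real.cos_sq']; ring
    rw [hP2def, Finset.sum_congr rfl fun j _ => e (θ j), Finset.sum_sub_distrib,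
      Finset.sum_const, Finset.card_univ, Fintype.card_fin, nsmul_eq_mul, mul_one,
      ← Finset.mul_sum, ← hSdef, ← hNdef]
  have hiii : 1 - 2*(S/N) ≤ R := by
    have h1 : ρ₂.re ≤ R := Complex.re_le_norm ρ₂
    rw [hre, hP2S] at h1
    have e : (N - 2*S)/N = 1 - 2*(S/N) := by field_simp
    rw [e] at h1
    exact h1
  -- conclude
  rcases eq_or_lt_of_le hρ₁nonneg with hr0 | hr0
  · exfalso
    rw [← hr0] at hi
    simp only [ne_eq, OfNat.ofNat_ne_zero, not_false_eq_true, zero_pow, zero_mul,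
      zero_sub, neg_sq, zero_add] at hi
    have h1 : Cs/N^2 ≤ δ := by
      by_contra hx
      push_neg at hx
      nlinarith only [hi, hδ0,
        mul_pos (sub_pos.2 hx) (show (0:ℝ) < Cs/N^2 + δ by linarith)]
    nlinarith only [hii, sq_nonneg R, h1, hδ4]
  · have hρne : ρ₁ ≠ 0 := ne_of_gt hr0
    have hu : 0 < ρ₁^2 := by positivity
    have hcore := core_ineq (ρ₁^2) δ R (S/N) (Cs/N^2) hi hii hiii hδ0 hδ4
      hu hρ₁small hR0 (div_nonneg hS0 hN.le)
    have heq2 : 1 - 2*(1-μ)^2/ρ₁^2 + (1-2*ρ₁^2)^2/(8*ρ₁^2)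
        = ((1+2*ρ₁^2)^2 - 16*δ^2)/(8*ρ₁^2) := by
      rw [hδdef]; field_simp; ring
    rw [ge_iff_le, heq2, div_le_iff₀ (by positivity : (0:ℝ) < 8*ρ₁^2)]
    linarith only [hcore]
end

section
/- Suppose the network has connectivity at least μ̃ with μ̃ > 3/4. Then every stable equilibrium θ (normalized so that ∑_j sin(θ_j) = 0 and ∑_j cos(θ_j) ≥ 0) is the all-in-phase state: for all j, k there is an integer m with θ_j − θ_k = 2πm. -/
set_option maxHeartbeats 1000000
set_option linter.unusedVariables false

theorem lem_t2 (e p : ℝ) (he0 : 0 < e) (he : e < 1/4) (hp0 : 0 ≤ p) (hp : p ≤ 2*e)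
    (hw : 1-2*e-2*p+2*p^2 ≤ e^2) :
    ((2*e-p)/2)^2 < (1-2*e-2*p+2*p^2)*p := by
  nlinarith [sq_nonneg (p-2*e), sq_nonneg (1-2*p), mul_pos he0 he0, sq_nonneg (1-4*e),
    mul_nonneg hp0 (sq_nonneg (1-2*p)), mul_nonneg (sub_nonneg.2 hp) (sq_nonneg (1-2*p)),
    mul_nonneg hp0 (sub_nonneg.2 hp), mul_pos he0 (sub_pos.2 he)]

theorem key_norm (e s p z : ℝ) (he0 : 0 ≤ e) (he : e < 1/4) (hs0 : 0 ≤ s) (hse : s ≤ e)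
    (hp0 : 0 ≤ p) (hz0 : 0 ≤ z)
    (A1 : p^2*(2*e+s^2) ≤ 4*e^2*p)
    (A3 : z^2 + s^2*p ≤ 2*e*z)
    (A4 : p^2 + (1-p)^2 + z ≤ s^2 + 2*e) : False := by
  have hse2 : s^2 ≤ e^2 := by nlinarith
  rcases hp0.eq_or_lt with hp | hppos
  · nlinarith
  rcases eq_or_lt_of_le he0 with h0 | he0'
  · have hs : s = 0 := by nlinarith
    rw [hs, ← h0] at A4
    nlinarith [sq_nonneg (2*p-1)]
  · have hA1' : p*(2*e+s^2) ≤ 4*e^2 := by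
      have : p*(p*(2*e+s^2)) ≤ p*(4*e^2) := by nlinarith
      exact le_of_mul_le_mul_left this hppos
    have hp2e : p ≤ 2*e := by nlinarith
    have hm : (1-2*e-2*p+2*p^2) + z ≤ s^2 := by nlinarith
    have hms : 1-2*e-2*p+2*p^2 ≤ e^2 := by nlinarith
    have hchain : (1-2*e-2*p+2*p^2)*p ≤ ((2*e-p)/2)^2 := by
      nlinarith [sq_nonneg (z - (2*e-p)/2), mul_nonneg (sub_nonneg.2 hm) hppos.le]
    linarith [lem_t2 e p he0' he hp0 hp2e hms]

theorem lem_key (n e S P Q R Z U : ℝ) (hn : 0 < n) (he0 : 0 ≤ e) (he : e < 1/4)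
    (hS0 : 0 ≤ S) (hSe : S ≤ e*n) (hPQ : P + Q = n) (hP0 : 0 ≤ P) (hZ0 : 0 ≤ Z) (hU0 : 0 ≤ U)
    (F1 : P^2 + R^2 + U ≤ 2*e*n*P)
    (F2 : S^2*P^2 ≤ 2*e*n^2*U)
    (F3 : Z^2 + n*(S^2*P) ≤ 2*e*n^2*Z)
    (F4 : P^2 + Q^2 + 2*R^2 + Z ≤ S^2 + 2*e*n^2) : False := by
  apply key_norm e (S/n) (P/n) (Z/n^2) he0 he (div_nonneg hS0 hn.le)
    ((div_le_iff₀ hn).2 hSe) (div_nonneg hP0 hn.le) (div_nonneg hZ0 (by positivity))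
  · rw [← sub_nonneg]
    have hid : 4*e^2*(P/n) - (P/n)^2*(2*e+(S/n)^2)
        = (4*e^2*P*n^3 - P^2*(2*e*n^2+S^2))/n^4 := by
      field_simp
    rw [hid]
    apply div_nonneg _ (by positivity)
    have h1 : 2*e*n^2*(P^2 + R^2 + U) ≤ 2*e*n^2*(2*e*n*P) :=
      mul_le_mul_of_nonneg_left F1 (by positivity)
    have h2 : (0:ℝ) ≤ 2*e*n^2*R^2 := by positivity
    nlinarith [h1, h2, F2]
  · rw [← sub_nonneg]
    have hid : 2*e*(Z/n^2) - ((Z/n^2)^2 + (S/n)^2*(P/n))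
        = (2*e*n^2*Z - Z^2 - n*(S^2*P))/n^4 := by field_simp; ring
    rw [hid]; exact div_nonneg (by linarith) (by positivity)
  · rw [← sub_nonneg]
    have hQ : Q = n - P := by linarith
    have hid : (S/n)^2 + 2*e - ((P/n)^2 + (1-P/n)^2 + Z/n^2)
        = (S^2 + 2*e*n^2 - P^2 - (n-P)^2 - Z)/n^2 := by field_simp; ring
    rw [hid]
    apply div_nonneg _ (by positivity)
    nlinarith [F4, sq_nonneg R]


theorem lemE4 (n : ℕ) (A : Fin n → Fin n → ℝ) (θ : Fin n → ℝ)
    (hsym : ∀ j k, A j k = A k j)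
    (hstab : ∀ v : Fin n → ℝ,
      0 ≤ ∑ j : Fin n, ∑ k : Fin n, A j k * Real.cos (θ k - θ j) * (v j - v k) ^ 2)
    (v : Fin n → ℝ) :
    ∑ j : Fin n, ∑ k : Fin n, A j k * Real.cos (θ k - θ j) * (v j * v k)
      ≤ ∑ j : Fin n, (∑ k : Fin n, A j k * Real.cos (θ k - θ j)) * (v j)^2 := by
  have hflip : ∀ j k, A j k * Real.cos (θ k - θ j) = A k j * Real.cos (θ j - θ k) := by
    intro j k; rw [hsym j k, ← Real.cos_neg, neg_sub]
  have h := hstab v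
  have h1 : ∀ j : Fin n, ∑ k : Fin n, A j k * Real.cos (θ k - θ j) * (v j - v k)^2
      = (∑ k : Fin n, A j k * Real.cos (θ k - θ j)) * (v j)^2
        + (∑ k : Fin n, A j k * Real.cos (θ k - θ j) * (v k)^2)
        - 2 * (∑ k : Fin n, A j k * Real.cos (θ k - θ j) * (v j * v k)) := by
    intro j
    rw [Finset.sum_mul, ← Finset.sum_add_distrib, Finset.mul_sum, ← Finset.sum_sub_distrib]
    exact Finset.sum_congr rfl fun k _ => by ring
  rw [Finset.sum_congr rfl (fun j _ => h1 j), Finset.sum_sub_distrib, Finset.sum_add_distrib,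
    ← Finset.mul_sum] at h
  have h2 : ∑ j : Fin n, ∑ k : Fin n, A j k * Real.cos (θ k - θ j) * (v k)^2
      = ∑ j : Fin n, (∑ k : Fin n, A j k * Real.cos (θ k - θ j)) * (v j)^2 := by
    rw [Finset.sum_comm]
    refine Finset.sum_congr rfl fun k _ => ?_
    rw [Finset.sum_mul]
    exact Finset.sum_congr rfl fun j _ => by rw [hflip j k]
  rw [h2] at h
  linarith

theorem lemXY (n : ℕ) (A : Fin n → Fin n → ℝ) (θ : Fin n → ℝ) (j : Fin n)
    (heqj : ∑ k : Fin n, A j k * Real.sin (θ k - θ j) = 0)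
    (hsin0 : ∑ k : Fin n, Real.sin (θ k) = 0) :
    (∑ k : Fin n, A j k * Real.cos (θ k))
        = (∑ k : Fin n, A j k * Real.cos (θ k - θ j)) * Real.cos (θ j)
      ∧ (∑ k : Fin n, A j k * Real.sin (θ k))
        = (∑ k : Fin n, A j k * Real.cos (θ k - θ j)) * Real.sin (θ j) := by
  have pyth := Real.sin_sq_add_cos_sq (θ j)
  have hκ : (∑ k : Fin n, A j k * Real.cos (θ k - θ j))
      = (∑ k : Fin n, A j k * Real.cos (θ k)) * Real.cos (θ j)
        + (∑ k : Fin n, A j k * Real.sin (θ k)) * Real.sin (θ j) := by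
    rw [Finset.sum_mul, Finset.sum_mul, ← Finset.sum_add_distrib]
    exact Finset.sum_congr rfl fun k _ => by rw [Real.cos_sub]; ring
  have hE : (∑ k : Fin n, A j k * Real.sin (θ k)) * Real.cos (θ j)
      - (∑ k : Fin n, A j k * Real.cos (θ k)) * Real.sin (θ j) = 0 := by
    rw [← heqj, Finset.sum_mul, Finset.sum_mul, ← Finset.sum_sub_distrib]
    exact Finset.sum_congr rfl fun k _ => by rw [Real.sin_sub]; ring
  constructor
  · linear_combination (-Real.cos (θ j)) * hκ - (Real.sin (θ j)) * hE
      - (∑ k : Fin n, A j k * Real.cos (θ k)) * pyth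
  · linear_combination (-Real.sin (θ j)) * hκ + (Real.cos (θ j)) * hE
      - (∑ k : Fin n, A j k * Real.sin (θ k)) * pyth


theorem lemKappa1 (n : ℕ) (A : Fin n → Fin n → ℝ) (θ : Fin n → ℝ)
    (hdiag : ∀ j, A j j = 1)
    (hE4 : ∀ v : Fin n → ℝ,
      ∑ j : Fin n, ∑ k : Fin n, A j k * Real.cos (θ k - θ j) * (v j * v k)
        ≤ ∑ j : Fin n, (∑ k : Fin n, A j k * Real.cos (θ k - θ j)) * (v j)^2)
    (j : Fin n) : 1 ≤ ∑ k : Fin n, A j k * Real.cos (θ k - θ j) := by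
  have h := hE4 (fun k => if k = j then 1 else 0)
  have hL : ∑ j' : Fin n, ∑ k : Fin n, A j' k * Real.cos (θ k - θ j') *
      ((if j' = j then (1:ℝ) else 0) * (if k = j then (1:ℝ) else 0)) = 1 := by
    rw [Finset.sum_eq_single_of_mem j (Finset.mem_univ j)]
    · rw [Finset.sum_eq_single_of_mem j (Finset.mem_univ j)]
      · simp [hdiag j]
      · intro k _ hk; simp [hk]
    · intro j' _ hj'; simp [hj']
  have hR : ∑ j' : Fin n, (∑ k : Fin n, A j' k * Real.cos (θ k - θ j')) *
      ((if j' = j then (1:ℝ) else 0))^2 = ∑ k : Fin n, A j k * Real.cos (θ k - θ j) := by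
    rw [Finset.sum_eq_single_of_mem j (Finset.mem_univ j)]
    · simp
    · intro j' _ hj'; simp [hj']
  simp only [hL, hR] at h
  exact h


theorem lemPV (n : ℕ) (A : Fin n → Fin n → ℝ) (θ : Fin n → ℝ) (e : ℝ) (j : Fin n)
    (h01j : ∀ k, A j k = 0 ∨ A j k = 1)
    (heqj : ∑ k : Fin n, A j k * Real.sin (θ k - θ j) = 0)
    (hsin0 : ∑ k : Fin n, Real.sin (θ k) = 0)
    (hXj : (∑ k : Fin n, A j k * Real.cos (θ k))
        = (∑ k : Fin n, A j k * Real.cos (θ k - θ j)) * Real.cos (θ j))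
    (hYj : (∑ k : Fin n, A j k * Real.sin (θ k))
        = (∑ k : Fin n, A j k * Real.cos (θ k - θ j)) * Real.sin (θ j))
    (hbe : ∑ k : Fin n, (1 - A j k) ≤ e * n) :
    (∑ k : Fin n, (1 - A j k) * (1 + Real.cos (θ k - θ j)))^2
      + (∑ k : Fin n, Real.cos (θ k))^2 * (Real.sin (θ j))^2
      ≤ 2*(e*(n:ℝ))*(∑ k : Fin n, (1 - A j k) * (1 + Real.cos (θ k - θ j))) := by
  set b : ℝ := ∑ k : Fin n, (1 - A j k) with hbdef
  set g : ℝ := ∑ k : Fin n, (1 - A j k) * (1 + Real.cos (θ k - θ j)) with hgdef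
  set S : ℝ := ∑ k : Fin n, Real.cos (θ k) with hSdef
  set κ : ℝ := ∑ k : Fin n, A j k * Real.cos (θ k - θ j) with hκdef
  have hB0 : ∀ k, 0 ≤ 1 - A j k := by
    intro k; rcases h01j k with h|h <;> rw [h] <;> norm_num
  have hBsq : ∀ k, (1 - A j k)^2 = 1 - A j k := by
    intro k; rcases h01j k with h|h <;> rw [h] <;> norm_num
  have hg0 : 0 ≤ g := Finset.sum_nonneg fun k _ =>
    mul_nonneg (hB0 k) (by nlinarith [Real.neg_one_le_cos (θ k - θ j)])
  have hb0 : 0 ≤ b := Finset.sum_nonneg fun k _ => hB0 k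
  set W1 : ℝ := ∑ k : Fin n, (1 - A j k) * (Real.cos (θ k) + Real.cos (θ j)) with hW1def
  set W2 : ℝ := ∑ k : Fin n, (1 - A j k) * (Real.sin (θ k) + Real.sin (θ j)) with hW2def
  -- Cauchy-Schwarz
  have hCS1 : W1^2 ≤ b * ∑ k : Fin n, (1 - A j k) * (Real.cos (θ k) + Real.cos (θ j))^2 := by
    have h := Finset.sum_mul_sq_le_sq_mul_sq Finset.univ (fun k => 1 - A j k)
      (fun k => (1 - A j k) * (Real.cos (θ k) + Real.cos (θ j)))
    have e1 : ∑ k : Fin n, (1 - A j k) * ((1 - A j k) * (Real.cos (θ k) + Real.cos (θ j)))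
        = W1 := Finset.sum_congr rfl fun k _ => by
      rw [show (1 - A j k) * ((1 - A j k) * (Real.cos (θ k) + Real.cos (θ j)))
        = (1 - A j k)^2 * (Real.cos (θ k) + Real.cos (θ j)) by ring, hBsq k]
    have e2 : ∑ k : Fin n, ((1 - A j k) * (Real.cos (θ k) + Real.cos (θ j)))^2
        = ∑ k : Fin n, (1 - A j k) * (Real.cos (θ k) + Real.cos (θ j))^2 :=
      Finset.sum_congr rfl fun k _ => by
        rw [mul_pow, hBsq k]
    have e3 : ∑ k : Fin n, (1 - A j k)^2 = b := Finset.sum_congr rfl fun k _ => hBsq k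
    rw [e1, e2, e3] at h; exact h
  have hCS2 : W2^2 ≤ b * ∑ k : Fin n, (1 - A j k) * (Real.sin (θ k) + Real.sin (θ j))^2 := by
    have h := Finset.sum_mul_sq_le_sq_mul_sq Finset.univ (fun k => 1 - A j k)
      (fun k => (1 - A j k) * (Real.sin (θ k) + Real.sin (θ j)))
    have e1 : ∑ k : Fin n, (1 - A j k) * ((1 - A j k) * (Real.sin (θ k) + Real.sin (θ j)))
        = W2 := Finset.sum_congr rfl fun k _ => by
      rw [show (1 - A j k) * ((1 - A j k) * (Real.sin (θ k) + Real.sin (θ j)))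
        = (1 - A j k)^2 * (Real.sin (θ k) + Real.sin (θ j)) by ring, hBsq k]
    have e2 : ∑ k : Fin n, ((1 - A j k) * (Real.sin (θ k) + Real.sin (θ j)))^2
        = ∑ k : Fin n, (1 - A j k) * (Real.sin (θ k) + Real.sin (θ j))^2 :=
      Finset.sum_congr rfl fun k _ => by rw [mul_pow, hBsq k]
    have e3 : ∑ k : Fin n, (1 - A j k)^2 = b := Finset.sum_congr rfl fun k _ => hBsq k
    rw [e1, e2, e3] at h; exact h
  have hsum2g : (∑ k : Fin n, (1 - A j k) * (Real.cos (θ k) + Real.cos (θ j))^2)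
      + (∑ k : Fin n, (1 - A j k) * (Real.sin (θ k) + Real.sin (θ j))^2) = 2*g := by
    rw [← Finset.sum_add_distrib, hgdef, Finset.mul_sum]
    refine Finset.sum_congr rfl fun k _ => ?_
    have p1 := Real.sin_sq_add_cos_sq (θ k)
    have p2 := Real.sin_sq_add_cos_sq (θ j)
    rw [Real.cos_sub]
    linear_combination (1 - A j k) * p1 + (1 - A j k) * p2
  have hCS : W1^2 + W2^2 ≤ 2*b*g := by
    calc W1^2 + W2^2 ≤ b * ((∑ k : Fin n, (1 - A j k) * (Real.cos (θ k) + Real.cos (θ j))^2)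
          + (∑ k : Fin n, (1 - A j k) * (Real.sin (θ k) + Real.sin (θ j))^2)) := by
            rw [mul_add]; exact add_le_add hCS1 hCS2
      _ = 2*b*g := by rw [hsum2g]; ring
  -- identities
  have hW1 : W1 = S - (κ - b) * Real.cos (θ j) := by
    rw [hW1def, hSdef]
    rw [show ∑ k : Fin n, (1 - A j k) * (Real.cos (θ k) + Real.cos (θ j))
      = (∑ k : Fin n, Real.cos (θ k)) - (∑ k : Fin n, A j k * Real.cos (θ k))
        + b * Real.cos (θ j) from ?_]
    · rw [hXj]; ring
    · rw [hbdef, Finset.sum_mul, ← Finset.sum_sub_distrib, ← Finset.sum_add_distrib]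
      exact Finset.sum_congr rfl fun k _ => by ring
  have hW2 : W2 = -(κ - b) * Real.sin (θ j) := by
    rw [hW2def]
    rw [show ∑ k : Fin n, (1 - A j k) * (Real.sin (θ k) + Real.sin (θ j))
      = (∑ k : Fin n, Real.sin (θ k)) - (∑ k : Fin n, A j k * Real.sin (θ k))
        + b * Real.sin (θ j) from ?_]
    · rw [hYj, hsin0]; ring
    · rw [hbdef, Finset.sum_mul, ← Finset.sum_sub_distrib, ← Finset.sum_add_distrib]
      exact Finset.sum_congr rfl fun k _ => by ring
  have hgk : κ + g = S * Real.cos (θ j) + b := by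
    have hall : ∑ k : Fin n, Real.cos (θ k - θ j) = S * Real.cos (θ j) := by
      rw [hSdef, Finset.sum_mul, ← sub_eq_zero]
      rw [show (∑ k : Fin n, Real.cos (θ k - θ j)) - ∑ k : Fin n, Real.cos (θ k) * Real.cos (θ j)
        = (∑ k : Fin n, Real.sin (θ k)) * Real.sin (θ j) from ?_]
      · rw [hsin0]; ring
      · rw [Finset.sum_mul, ← Finset.sum_sub_distrib]
        exact Finset.sum_congr rfl fun k _ => by rw [Real.cos_sub]; ring
    have : g = b + ((∑ k : Fin n, Real.cos (θ k - θ j)) - κ) := by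
      rw [hgdef, hκdef, hbdef, ← Finset.sum_sub_distrib, ← Finset.sum_add_distrib]
      exact Finset.sum_congr rfl fun k _ => by ring
    rw [this, hall]; ring
  have hτ : κ - b = S * Real.cos (θ j) - g := by linarith
  have pyth := Real.sin_sq_add_cos_sq (θ j)
  have hid : W1^2 + W2^2 = g^2 + S^2*(Real.sin (θ j))^2 := by
    rw [hW1, hW2, hτ]
    linear_combination (g^2 - 2*S*g*Real.cos (θ j) - S^2 + S^2*(Real.cos (θ j))^2) * pyth
  nlinarith [mul_le_mul_of_nonneg_right hbe (mul_nonneg (by norm_num : (0:ℝ) ≤ 2) hg0)]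


theorem lemDiamond (n : ℕ) (A : Fin n → Fin n → ℝ) (θ : Fin n → ℝ) (v : Fin n → ℝ)
    (hsym : ∀ j k, A j k = A k j)
    (h01 : ∀ j k, A j k = 0 ∨ A j k = 1)
    (hE4 : ∀ u : Fin n → ℝ,
      ∑ j : Fin n, ∑ k : Fin n, A j k * Real.cos (θ k - θ j) * (u j * u k)
        ≤ ∑ j : Fin n, (∑ k : Fin n, A j k * Real.cos (θ k - θ j)) * (u j)^2)
    (hv : ∀ j, (∑ k : Fin n, A j k * v k)
        = (∑ k : Fin n, A j k * Real.cos (θ k - θ j)) * v j) :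
    (∑ k : Fin n, Real.cos (θ k) * v k)^2 + (∑ k : Fin n, Real.sin (θ k) * v k)^2
      ≤ (∑ k : Fin n, v k)^2
        + ∑ j : Fin n, (v j)^2 * (∑ k : Fin n, (1 - A j k) * (1 - Real.cos (θ k - θ j))) := by
  have hB0 : ∀ j k, 0 ≤ 1 - A j k := by
    intro j k; rcases h01 j k with h|h <;> rw [h] <;> norm_num
  have hw0 : ∀ j k, 0 ≤ (1 - A j k) * (1 - Real.cos (θ k - θ j)) := fun j k =>
    mul_nonneg (hB0 j k) (by nlinarith [Real.cos_le_one (θ k - θ j)])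
  have hwsym : ∀ j k, (1 - A j k) * (1 - Real.cos (θ k - θ j))
      = (1 - A k j) * (1 - Real.cos (θ j - θ k)) := by
    intro j k; rw [hsym j k, ← Real.cos_neg (θ j - θ k), neg_sub]
  -- step 1 : E4 with RHS rewritten
  have h0 : ∑ j : Fin n, ∑ k : Fin n, A j k * Real.cos (θ k - θ j) * (v j * v k)
      ≤ ∑ j : Fin n, ∑ k : Fin n, A j k * (v j * v k) := by
    refine le_trans (hE4 v) (le_of_eq (Finset.sum_congr rfl fun j _ => ?_))
    rw [show (∑ k : Fin n, A j k * Real.cos (θ k - θ j)) * (v j)^2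
      = ((∑ k : Fin n, A j k * Real.cos (θ k - θ j)) * v j) * v j by ring, ← hv j,
      Finset.sum_mul]
    exact Finset.sum_congr rfl fun k _ => by ring
  -- step 2 : splitting over A = 1 - (1-A)
  have hsplit : ∀ (F : Fin n → Fin n → ℝ),
      ∑ j : Fin n, ∑ k : Fin n, A j k * F j k
        = (∑ j : Fin n, ∑ k : Fin n, F j k)
          - ∑ j : Fin n, ∑ k : Fin n, (1 - A j k) * F j k := by
    intro F
    rw [← Finset.sum_sub_distrib]
    refine Finset.sum_congr rfl fun j _ => ?_
    rw [← Finset.sum_sub_distrib]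
    exact Finset.sum_congr rfl fun k _ => by ring
  have hall1 : ∑ j : Fin n, ∑ k : Fin n, Real.cos (θ k - θ j) * (v j * v k)
      = (∑ k : Fin n, Real.cos (θ k) * v k)^2 + (∑ k : Fin n, Real.sin (θ k) * v k)^2 := by
    have per_j : ∀ j : Fin n, ∑ k : Fin n, Real.cos (θ k - θ j) * (v j * v k)
        = (Real.cos (θ j) * v j) * (∑ k : Fin n, Real.cos (θ k) * v k)
          + (Real.sin (θ j) * v j) * (∑ k : Fin n, Real.sin (θ k) * v k) := by
      intro j
      rw [Finset.mul_sum, Finset.mul_sum, ← Finset.sum_add_distrib]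
      exact Finset.sum_congr rfl fun k _ => by rw [Real.cos_sub]; ring
    rw [Finset.sum_congr rfl (fun j _ => per_j j), Finset.sum_add_distrib,
      ← Finset.sum_mul, ← Finset.sum_mul]
    ring
  have hall2 : ∑ j : Fin n, ∑ k : Fin n, (v j * v k) = (∑ k : Fin n, v k)^2 := by
    rw [show (∑ k : Fin n, v k)^2 = (∑ j : Fin n, v j) * (∑ k : Fin n, v k) by ring,
      Finset.sum_mul]
    exact Finset.sum_congr rfl fun j _ => by rw [Finset.mul_sum]
  -- step 3 : AM-GM on the complement part
  have hswap : ∑ j : Fin n, ∑ k : Fin n, (1 - A j k) * (1 - Real.cos (θ k - θ j)) * (v k)^2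
      = ∑ j : Fin n, (v j)^2 * (∑ k : Fin n, (1 - A j k) * (1 - Real.cos (θ k - θ j))) := by
    rw [Finset.sum_comm]
    refine Finset.sum_congr rfl fun k _ => ?_
    rw [Finset.mul_sum]
    exact Finset.sum_congr rfl fun j _ => by rw [hwsym j k]; ring
  have hAM : - (∑ j : Fin n, ∑ k : Fin n, (1 - A j k) * (1 - Real.cos (θ k - θ j)) * (v j * v k))
      ≤ ∑ j : Fin n, (v j)^2 * (∑ k : Fin n, (1 - A j k) * (1 - Real.cos (θ k - θ j))) := by
    have hnn : 0 ≤ ∑ j : Fin n, ∑ k : Fin n,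
        (1 - A j k) * (1 - Real.cos (θ k - θ j)) * (v j + v k)^2 :=
      Finset.sum_nonneg fun j _ => Finset.sum_nonneg fun k _ =>
        mul_nonneg (hw0 j k) (sq_nonneg _)
    have hexp : ∑ j : Fin n, ∑ k : Fin n,
          (1 - A j k) * (1 - Real.cos (θ k - θ j)) * (v j + v k)^2
        = (∑ j : Fin n, ∑ k : Fin n, (1 - A j k) * (1 - Real.cos (θ k - θ j)) * (v j)^2)
          + (∑ j : Fin n, ∑ k : Fin n, (1 - A j k) * (1 - Real.cos (θ k - θ j)) * (v k)^2)
          + 2 * ∑ j : Fin n, ∑ k : Fin n,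
              (1 - A j k) * (1 - Real.cos (θ k - θ j)) * (v j * v k) := by
      rw [Finset.mul_sum, ← Finset.sum_add_distrib, ← Finset.sum_add_distrib]
      refine Finset.sum_congr rfl fun j _ => ?_
      rw [Finset.mul_sum, ← Finset.sum_add_distrib, ← Finset.sum_add_distrib]
      exact Finset.sum_congr rfl fun k _ => by ring
    have hfirst : ∑ j : Fin n, ∑ k : Fin n, (1 - A j k) * (1 - Real.cos (θ k - θ j)) * (v j)^2
        = ∑ j : Fin n, (v j)^2 * (∑ k : Fin n, (1 - A j k) * (1 - Real.cos (θ k - θ j))) := by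
      refine Finset.sum_congr rfl fun j _ => ?_
      rw [Finset.mul_sum]
      exact Finset.sum_congr rfl fun k _ => by ring
    rw [hexp, hfirst, hswap] at hnn
    linarith
  -- assemble
  have hassoc : ∑ j : Fin n, ∑ k : Fin n, A j k * Real.cos (θ k - θ j) * (v j * v k)
      = ∑ j : Fin n, ∑ k : Fin n, A j k * (Real.cos (θ k - θ j) * (v j * v k)) :=
    Finset.sum_congr rfl fun j _ => Finset.sum_congr rfl fun k _ => by ring
  rw [hassoc, hsplit (fun j k => Real.cos (θ k - θ j) * (v j * v k)), hall1] at h0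
  rw [hsplit (fun j k => (v j * v k)), hall2] at h0
  have hcomb : (∑ j : Fin n, ∑ k : Fin n, (1 - A j k) * (Real.cos (θ k - θ j) * (v j * v k)))
      - (∑ j : Fin n, ∑ k : Fin n, (1 - A j k) * (v j * v k))
      = - ∑ j : Fin n, ∑ k : Fin n, (1 - A j k) * (1 - Real.cos (θ k - θ j)) * (v j * v k) := by
    rw [← Finset.sum_sub_distrib, ← Finset.sum_neg_distrib]
    refine Finset.sum_congr rfl fun j _ => ?_
    rw [← Finset.sum_sub_distrib, ← Finset.sum_neg_distrib]
    exact Finset.sum_congr rfl fun k _ => by ring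
  linarith [hAM, h0, hcomb.ge, hcomb.le]

set_option maxHeartbeats 1000000 in
theorem cos_pos_all (n : ℕ) (hn : 1 ≤ n) (A : Fin n → Fin n → ℝ) (θ : Fin n → ℝ) (μ : ℝ)
    (hμ0 : 3 / 4 < μ) (hμ1 : μ ≤ 1)
    (hsym : ∀ j k, A j k = A k j)
    (h01 : ∀ j k, A j k = 0 ∨ A j k = 1)
    (hdiag : ∀ j, A j j = 1)
    (hconn : ∀ j, μ * n ≤ ∑ k : Fin n, A j k)
    (heq : ∀ j, ∑ k : Fin n, A j k * Real.sin (θ k - θ j) = 0)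
    (hstab : ∀ v : Fin n → ℝ,
      0 ≤ ∑ j : Fin n, ∑ k : Fin n,
            A j k * Real.cos (θ k - θ j) * (v j - v k) ^ 2)
    (hsin0 : ∑ j : Fin n, Real.sin (θ j) = 0)
    (hcos0 : 0 ≤ ∑ j : Fin n, Real.cos (θ j)) :
    ∀ j : Fin n, 0 < Real.cos (θ j) := by
  by_contra hbad
  push_neg at hbad
  obtain ⟨m, hm⟩ := hbad
  have hn0 : (0:ℝ) < (n:ℝ) := by exact_mod_cast Nat.pos_of_ne_zero (by omega)
  have he0 : (0:ℝ) ≤ 1 - μ := by linarith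
  have he : (1:ℝ) - μ < 1/4 := by linarith
  have hB0 : ∀ j k, 0 ≤ 1 - A j k := by
    intro j k; rcases h01 j k with h|h <;> rw [h] <;> norm_num
  have hbe : ∀ j, ∑ k : Fin n, (1 - A j k) ≤ (1-μ) * n := by
    intro j
    have h1 : ∑ k : Fin n, (1 - A j k) = (n:ℝ) - ∑ k : Fin n, A j k := by
      rw [Finset.sum_sub_distrib, Finset.sum_const, Finset.card_univ, Fintype.card_fin,
        nsmul_eq_mul, mul_one]
    have h2 := hconn j
    have h3 : (1-μ) * n = (n:ℝ) - μ * n := by ring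
    linarith
  have hE4 := lemE4 n A θ hsym hstab
  have hκ1 : ∀ j, 1 ≤ ∑ k : Fin n, A j k * Real.cos (θ k - θ j) :=
    lemKappa1 n A θ hdiag hE4
  have hXY : ∀ j, (∑ k : Fin n, A j k * Real.cos (θ k))
        = (∑ k : Fin n, A j k * Real.cos (θ k - θ j)) * Real.cos (θ j)
      ∧ (∑ k : Fin n, A j k * Real.sin (θ k))
        = (∑ k : Fin n, A j k * Real.cos (θ k - θ j)) * Real.sin (θ j) :=
    fun j => lemXY n A θ j (heq j) hsin0
  -- per-vertex complement degree and PV inequality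
  have hPV : ∀ j, (∑ k : Fin n, (1 - A j k) * (1 + Real.cos (θ k - θ j)))^2
      + (∑ k : Fin n, Real.cos (θ k))^2 * (Real.sin (θ j))^2
      ≤ 2*((1-μ)*(n:ℝ))*(∑ k : Fin n, (1 - A j k) * (1 + Real.cos (θ k - θ j))) :=
    fun j => lemPV n A θ (1-μ) j (h01 j) (heq j) hsin0 ((hXY j).1) ((hXY j).2) (hbe j)
  -- abbreviations (plain definitions, no context rewriting)
  have hG0 : ∀ j, 0 ≤ ∑ k : Fin n, (1 - A j k) * (1 + Real.cos (θ k - θ j)) :=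
    fun j => Finset.sum_nonneg fun k _ =>
      mul_nonneg (hB0 j k) (by nlinarith [Real.neg_one_le_cos (θ k - θ j)])
  have hg0 : ∀ j, 0 ≤ ∑ k : Fin n, (1 - A j k) * (1 - Real.cos (θ k - θ j)) :=
    fun j => Finset.sum_nonneg fun k _ =>
      mul_nonneg (hB0 j k) (by nlinarith [Real.cos_le_one (θ k - θ j)])
  have hgg : ∀ j, ∑ k : Fin n, (1 - A j k) * (1 - Real.cos (θ k - θ j))
      = 2 * (∑ k : Fin n, (1 - A j k))
        - ∑ k : Fin n, (1 - A j k) * (1 + Real.cos (θ k - θ j)) := by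
    intro j
    rw [Finset.mul_sum, ← Finset.sum_sub_distrib]
    exact Finset.sum_congr rfl fun k _ => by ring
  -- the "bad vertex" bound : S ≤ (1-μ) n
  have hSe : (∑ k : Fin n, Real.cos (θ k)) ≤ (1-μ) * n := by
    have hdecomp : (∑ k : Fin n, Real.cos (θ k)) = (∑ k : Fin n, A m k * Real.cos (θ k))
        + ∑ k : Fin n, (1 - A m k) * Real.cos (θ k) := by
      rw [← Finset.sum_add_distrib]
      exact Finset.sum_congr rfl fun k _ => by ring
    have h1 : (∑ k : Fin n, A m k * Real.cos (θ k)) ≤ 0 := by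
      rw [(hXY m).1]
      exact mul_nonpos_of_nonneg_of_nonpos (by linarith [hκ1 m]) hm
    have h2 : ∑ k : Fin n, (1 - A m k) * Real.cos (θ k) ≤ ∑ k : Fin n, (1 - A m k) := by
      refine Finset.sum_le_sum fun k _ => ?_
      have := mul_le_mul_of_nonneg_left (Real.cos_le_one (θ k)) (hB0 m k)
      linarith [this]
    linarith [hbe m]
  -- diamond inequalities
  have hds := lemDiamond n A θ (fun k => Real.sin (θ k)) hsym h01 hE4 (fun j => (hXY j).2)
  have hdc := lemDiamond n A θ (fun k => Real.cos (θ k)) hsym h01 hE4 (fun j => (hXY j).1)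
  simp only [hsin0] at hds
  have hss : ∑ k : Fin n, Real.sin (θ k) * Real.sin (θ k) = ∑ k : Fin n, (Real.sin (θ k))^2 :=
    Finset.sum_congr rfl fun k _ => by ring
  have hcc : ∑ k : Fin n, Real.cos (θ k) * Real.cos (θ k) = ∑ k : Fin n, (Real.cos (θ k))^2 :=
    Finset.sum_congr rfl fun k _ => by ring
  have hsc : ∑ k : Fin n, Real.sin (θ k) * Real.cos (θ k)
      = ∑ k : Fin n, Real.cos (θ k) * Real.sin (θ k) :=
    Finset.sum_congr rfl fun k _ => by ring
  rw [hss] at hds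
  rw [hcc, hsc] at hdc
  -- weighted complement-degree bounds
  have hvg : ∀ w : Fin n → ℝ, (∀ j, 0 ≤ w j) →
      ∑ j : Fin n, w j * (∑ k : Fin n, (1 - A j k) * (1 - Real.cos (θ k - θ j)))
        ≤ 2*((1-μ)*n) * (∑ j : Fin n, w j)
          - ∑ j : Fin n, w j * (∑ k : Fin n, (1 - A j k) * (1 + Real.cos (θ k - θ j))) := by
    intro w hw
    have hper : ∀ j : Fin n,
        w j * (∑ k : Fin n, (1 - A j k) * (1 - Real.cos (θ k - θ j)))
        ≤ 2*((1-μ)*n) * w j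
          - w j * (∑ k : Fin n, (1 - A j k) * (1 + Real.cos (θ k - θ j))) := by
      intro j
      have hXB : w j * (∑ k : Fin n, (1 - A j k)) ≤ w j * ((1-μ)*n) :=
        mul_le_mul_of_nonneg_left (hbe j) (hw j)
      calc w j * (∑ k : Fin n, (1 - A j k) * (1 - Real.cos (θ k - θ j)))
          = 2 * (w j * (∑ k : Fin n, (1 - A j k)))
            - w j * (∑ k : Fin n, (1 - A j k) * (1 + Real.cos (θ k - θ j))) := by
            rw [hgg j]; ring
        _ ≤ 2*((1-μ)*n) * w j
            - w j * (∑ k : Fin n, (1 - A j k) * (1 + Real.cos (θ k - θ j))) := by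
            have : 2 * (w j * (∑ k : Fin n, (1 - A j k))) ≤ 2 * (w j * ((1-μ)*n)) := by
              linarith
            linarith [this]
    calc ∑ j : Fin n, w j * (∑ k : Fin n, (1 - A j k) * (1 - Real.cos (θ k - θ j)))
        ≤ ∑ j : Fin n, (2*((1-μ)*n) * w j
            - w j * (∑ k : Fin n, (1 - A j k) * (1 + Real.cos (θ k - θ j)))) :=
          Finset.sum_le_sum fun j _ => hper j
      _ = 2*((1-μ)*n) * (∑ j : Fin n, w j)
            - ∑ j : Fin n, w j * (∑ k : Fin n, (1 - A j k) * (1 + Real.cos (θ k - θ j))) := by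
          rw [Finset.sum_sub_distrib, Finset.mul_sum]
  have hvgs := hvg (fun j => (Real.sin (θ j))^2) (fun j => sq_nonneg _)
  have hvgc := hvg (fun j => (Real.cos (θ j))^2) (fun j => sq_nonneg _)
  have h00 : (0:ℝ)^2 = 0 := by norm_num
  rw [h00] at hds
  -- identities used for assembling
  have hPQ : (∑ j : Fin n, (Real.sin (θ j))^2) + (∑ j : Fin n, (Real.cos (θ j))^2) = n := by
    rw [← Finset.sum_add_distrib]
    rw [Finset.sum_congr rfl fun j _ => Real.sin_sq_add_cos_sq (θ j)]
    rw [Finset.sum_const, Finset.card_univ, Fintype.card_fin, nsmul_eq_mul, mul_one]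
  have hZsplit : (∑ j : Fin n, (Real.sin (θ j))^2
        * (∑ k : Fin n, (1 - A j k) * (1 + Real.cos (θ k - θ j))))
      + (∑ j : Fin n, (Real.cos (θ j))^2
        * (∑ k : Fin n, (1 - A j k) * (1 + Real.cos (θ k - θ j))))
      = ∑ j : Fin n, (∑ k : Fin n, (1 - A j k) * (1 + Real.cos (θ k - θ j))) := by
    rw [← Finset.sum_add_distrib]
    refine Finset.sum_congr rfl fun j _ => ?_
    linear_combination (∑ k : Fin n, (1 - A j k) * (1 + Real.cos (θ k - θ j)))
      * (Real.sin_sq_add_cos_sq (θ j))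
  -- per-vertex : multiply PV by sin², then sum
  have hPV4 : ∀ j : Fin n,
      (∑ k : Fin n, Real.cos (θ k))^2*(Real.sin (θ j))^4
      ≤ 2*((1-μ)*(n:ℝ))*((Real.sin (θ j))^2
          * (∑ k : Fin n, (1 - A j k) * (1 + Real.cos (θ k - θ j)))) := by
    intro j
    have h1 : (∑ k : Fin n, Real.cos (θ k))^2*(Real.sin (θ j))^2
        ≤ 2*((1-μ)*(n:ℝ))*(∑ k : Fin n, (1 - A j k) * (1 + Real.cos (θ k - θ j)))
          - (∑ k : Fin n, (1 - A j k) * (1 + Real.cos (θ k - θ j)))^2 := by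
      linarith [hPV j]
    have h2 := mul_le_mul_of_nonneg_right h1 (sq_nonneg (Real.sin (θ j)))
    have h3 : 0 ≤ (∑ k : Fin n, (1 - A j k) * (1 + Real.cos (θ k - θ j)))^2
        * (Real.sin (θ j))^2 := mul_nonneg (sq_nonneg _) (sq_nonneg _)
    nlinarith [h2, h3]
  have hsum4 : (∑ k : Fin n, Real.cos (θ k))^2 * (∑ j : Fin n, (Real.sin (θ j))^4)
      ≤ 2*((1-μ)*(n:ℝ))*(∑ j : Fin n, (Real.sin (θ j))^2
          * (∑ k : Fin n, (1 - A j k) * (1 + Real.cos (θ k - θ j)))) := by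
    rw [Finset.mul_sum, Finset.mul_sum]
    exact Finset.sum_le_sum fun j _ => hPV4 j
  -- Cauchy-Schwarz with ones : (∑ x)² ≤ n ∑ x²
  have hCSones : ∀ x : Fin n → ℝ,
      (∑ j : Fin n, x j)^2 ≤ (n:ℝ) * ∑ j : Fin n, (x j)^2 := by
    intro x
    have h := Finset.sum_mul_sq_le_sq_mul_sq Finset.univ (fun _ => (1:ℝ)) x
    have e1 : ∑ j : Fin n, (1:ℝ) * x j = ∑ j : Fin n, x j :=
      Finset.sum_congr rfl fun j _ => by ring
    have e2 : ∑ _j : Fin n, ((1:ℝ))^2 = (n:ℝ) := by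
      rw [Finset.sum_const, Finset.card_univ, Fintype.card_fin, nsmul_eq_mul]; norm_num
    rw [e1, e2] at h
    exact h
  have hP4 : (∑ j : Fin n, (Real.sin (θ j))^2)^2 ≤ (n:ℝ) * ∑ j : Fin n, (Real.sin (θ j))^4 := by
    have h := hCSones (fun j => (Real.sin (θ j))^2)
    have e1 : ∑ j : Fin n, ((Real.sin (θ j))^2)^2 = ∑ j : Fin n, (Real.sin (θ j))^4 :=
      Finset.sum_congr rfl fun j _ => by ring
    rw [e1] at h
    exact h
  -- summed PV
  have hsumPV : (∑ j : Fin n, (∑ k : Fin n, (1 - A j k) * (1 + Real.cos (θ k - θ j)))^2)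
      + (∑ k : Fin n, Real.cos (θ k))^2 * (∑ j : Fin n, (Real.sin (θ j))^2)
      ≤ 2*((1-μ)*(n:ℝ))*(∑ j : Fin n, (∑ k : Fin n, (1 - A j k) * (1 + Real.cos (θ k - θ j)))) := by
    have h := Finset.sum_le_sum fun j (_ : j ∈ Finset.univ) => hPV j
    rw [Finset.sum_add_distrib, ← Finset.mul_sum, ← Finset.mul_sum] at h
    exact h
  have hZ2 : (∑ j : Fin n, (∑ k : Fin n, (1 - A j k) * (1 + Real.cos (θ k - θ j))))^2
      ≤ (n:ℝ) * ∑ j : Fin n, (∑ k : Fin n, (1 - A j k) * (1 + Real.cos (θ k - θ j)))^2 :=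
    hCSones _
  -- apply the key contradiction lemma
  refine lem_key (n:ℝ) (1-μ) (∑ k : Fin n, Real.cos (θ k))
    (∑ j : Fin n, (Real.sin (θ j))^2) (∑ j : Fin n, (Real.cos (θ j))^2)
    (∑ k : Fin n, Real.cos (θ k) * Real.sin (θ k))
    (∑ j : Fin n, (∑ k : Fin n, (1 - A j k) * (1 + Real.cos (θ k - θ j))))
    (∑ j : Fin n, (Real.sin (θ j))^2
      * (∑ k : Fin n, (1 - A j k) * (1 + Real.cos (θ k - θ j))))
    hn0 he0 he hcos0 ?_ hPQ
    (Finset.sum_nonneg fun j _ => sq_nonneg _)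
    (Finset.sum_nonneg fun j _ => hG0 j)
    (Finset.sum_nonneg fun j _ => mul_nonneg (sq_nonneg _) (hG0 j))
    ?_ ?_ ?_ ?_
  · -- S ≤ e n
    linarith [hSe]
  · -- F1
    linarith [hds, hvgs]
  · -- F2
    have step1 : (∑ k : Fin n, Real.cos (θ k))^2 * (∑ j : Fin n, (Real.sin (θ j))^2)^2
        ≤ (∑ k : Fin n, Real.cos (θ k))^2 * ((n:ℝ) * ∑ j : Fin n, (Real.sin (θ j))^4) :=
      mul_le_mul_of_nonneg_left hP4 (sq_nonneg _)
    have step2 : (n:ℝ) * ((∑ k : Fin n, Real.cos (θ k))^2 * (∑ j : Fin n, (Real.sin (θ j))^4))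
        ≤ (n:ℝ) * (2*((1-μ)*(n:ℝ))*(∑ j : Fin n, (Real.sin (θ j))^2
          * (∑ k : Fin n, (1 - A j k) * (1 + Real.cos (θ k - θ j))))) :=
      mul_le_mul_of_nonneg_left hsum4 hn0.le
    nlinarith [step1, step2]
  · -- F3
    have step2 : (n:ℝ) * ((∑ j : Fin n, (∑ k : Fin n, (1 - A j k) * (1 + Real.cos (θ k - θ j)))^2)
        + (∑ k : Fin n, Real.cos (θ k))^2 * (∑ j : Fin n, (Real.sin (θ j))^2))
        ≤ (n:ℝ) * (2*((1-μ)*(n:ℝ))*(∑ j : Fin n,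
            (∑ k : Fin n, (1 - A j k) * (1 + Real.cos (θ k - θ j))))) :=
      mul_le_mul_of_nonneg_left hsumPV hn0.le
    nlinarith [hZ2, step2]
  · -- F4
    have hc : 2*((1-μ)*(n:ℝ))*(∑ j : Fin n, (Real.sin (θ j))^2)
        + 2*((1-μ)*(n:ℝ))*(∑ j : Fin n, (Real.cos (θ j))^2) = 2*(1-μ)*(n:ℝ)^2 := by
      linear_combination (2*((1-μ)*(n:ℝ))) * hPQ
    linarith [hds, hdc, hvgs, hvgc, hZsplit, hc]

/-- Main theorem: if the network has connectivity at least `μ̃ > 3/4`, then every stable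
equilibrium (suitably normalized) is the all-in-phase state. -/
theorem dense_network_globally_synchronizing
    (n : ℕ) (hn : 1 ≤ n) (A : Fin n → Fin n → ℝ) (θ : Fin n → ℝ) (μ : ℝ)
    (hμ0 : 3 / 4 < μ) (hμ1 : μ ≤ 1)
    (hsym : ∀ j k, A j k = A k j)
    (h01 : ∀ j k, A j k = 0 ∨ A j k = 1)
    (hdiag : ∀ j, A j j = 1)
    (hconn : ∀ j, μ * n ≤ ∑ k : Fin n, A j k)
    (heq : ∀ j, ∑ k : Fin n, A j k * Real.sin (θ k - θ j) = 0)
    (hstab : ∀ v : Fin n → ℝ,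
      0 ≤ ∑ j : Fin n, ∑ k : Fin n,
            A j k * Real.cos (θ k - θ j) * (v j - v k) ^ 2)
    (hsin0 : ∑ j : Fin n, Real.sin (θ j) = 0)
    (hcos0 : 0 ≤ ∑ j : Fin n, Real.cos (θ j)) :
    ∀ j k : Fin n, ∃ m : ℤ, θ j - θ k = 2 * Real.pi * m := by
  have hπ := Real.pi_pos
  have hcos := cos_pos_all n hn A θ μ hμ0 hμ1 hsym h01 hdiag hconn heq hstab hsin0 hcos0
  -- reduced phases
  set M : Fin n → ℤ := fun j => round (θ j / (2 * Real.pi)) with hMdef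
  set ψ : Fin n → ℝ := fun j => θ j - 2 * Real.pi * (M j) with hψdef
  clear_value M ψ
  have hθψ : ∀ j, θ j = ψ j + (M j) * (2 * Real.pi) := by
    intro j; simp only [hψdef]; ring
  have hψabs : ∀ j, |ψ j| ≤ Real.pi := by
    intro j
    have h : |θ j / (2 * Real.pi) - (M j : ℝ)| ≤ 1/2 := by
      simp only [hMdef]; exact abs_sub_round _
    have h2π : (0:ℝ) < 2 * Real.pi := by linarith
    have : ψ j = (θ j / (2 * Real.pi) - M j) * (2 * Real.pi) := by
      simp only [hψdef, hMdef]; field_simp; try ring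
    rw [this, abs_mul, abs_of_pos h2π]
    calc |θ j / (2 * Real.pi) - (M j : ℝ)| * (2 * Real.pi)
        ≤ 1/2 * (2 * Real.pi) := by
          exact mul_le_mul_of_nonneg_right h h2π.le
      _ = Real.pi := by ring
  have hcosψ : ∀ j, Real.cos (ψ j) = Real.cos (θ j) := by
    intro j
    simp only [hψdef]
    rw [show θ j - 2 * Real.pi * (M j) = θ j - (M j) * (2 * Real.pi) by ring]
    exact Real.cos_sub_int_mul_two_pi (θ j) (M j)
  have hψlt : ∀ j, |ψ j| < Real.pi / 2 := by
    intro j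
    by_contra hcon
    push_neg at hcon
    have h1 : Real.cos |ψ j| ≤ 0 :=
      Real.cos_nonpos_of_pi_div_two_le_of_le hcon (by linarith [hψabs j])
    rw [Real.cos_abs, hcosψ j] at h1
    linarith [hcos j]
  -- sin of differences only depends on ψ
  have hsindiff : ∀ j k, Real.sin (θ k - θ j) = Real.sin (ψ k - ψ j) := by
    intro j k
    rw [show θ k - θ j = (ψ k - ψ j) + ((M k - M j : ℤ)) * (2 * Real.pi) by
      push_cast; rw [hθψ j, hθψ k]; ring]
    exact Real.sin_add_int_mul_two_pi _ _
  -- a vertex of maximal reduced phase pulls in its neighbours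
  have hstep : ∀ j, (∀ k, ψ k ≤ ψ j) → ∀ k, A j k = 1 → ψ k = ψ j := by
    intro j hmax k hAjk
    have hsum : ∑ l : Fin n, A j l * Real.sin (ψ l - ψ j) = 0 := by
      rw [← heq j]
      exact Finset.sum_congr rfl fun l _ => by rw [hsindiff j l]
    have hterm : ∀ l : Fin n, A j l * Real.sin (ψ l - ψ j) ≤ 0 := by
      intro l
      apply mul_nonpos_of_nonneg_of_nonpos
      · rcases h01 j l with h|h <;> rw [h] <;> norm_num
      · apply Real.sin_nonpos_of_nonpos_of_neg_pi_le
        · linarith [hmax l]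
        · have h1 := abs_lt.1 (hψlt l)
          have h2 := abs_lt.1 (hψlt j)
          linarith [h1.1, h1.2, h2.1, h2.2]
    have hzero : ∀ l ∈ Finset.univ, A j l * Real.sin (ψ l - ψ j) = 0 :=
      (Finset.sum_eq_zero_iff_of_nonpos fun l _ => hterm l).1 hsum
    have hk := hzero k (Finset.mem_univ k)
    rw [hAjk, one_mul] at hk
    have habs1 := abs_lt.1 (hψlt k)
    have habs2 := abs_lt.1 (hψlt j)
    have := (Real.sin_eq_zero_iff_of_lt_of_lt
      (by linarith [habs1.1, habs2.2]) (by linarith [habs1.2, habs2.1])).1 hk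
    linarith
  -- common neighbours
  have hcommon : ∀ u v : Fin n, ∃ l, A u l = 1 ∧ A v l = 1 := by
    intro u v
    by_contra hcon
    push_neg at hcon
    have hble : ∀ l, A u l + A v l ≤ 1 := by
      intro l
      rcases h01 u l with h1|h1
      · rcases h01 v l with h2|h2 <;> rw [h1, h2] <;> norm_num
      · rcases h01 v l with h2|h2
        · rw [h1, h2]; norm_num
        · exact absurd h2 (hcon l h1)
    have hsum : ∑ l : Fin n, (A u l + A v l) ≤ (n:ℝ) := by
      calc ∑ l : Fin n, (A u l + A v l) ≤ ∑ _l : Fin n, (1:ℝ) :=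
          Finset.sum_le_sum fun l _ => hble l
        _ = (n:ℝ) := by
          rw [Finset.sum_const, Finset.card_univ, Fintype.card_fin, nsmul_eq_mul, mul_one]
    rw [Finset.sum_add_distrib] at hsum
    have h1 := hconn u; have h2 := hconn v
    have hn0 : (1:ℝ) ≤ (n:ℝ) := by exact_mod_cast hn
    nlinarith
  -- conclude : all reduced phases equal
  have hne : (Finset.univ : Finset (Fin n)).Nonempty :=
    ⟨⟨0, by omega⟩, Finset.mem_univ _⟩
  obtain ⟨Mx, _, hMx⟩ := Finset.exists_max_image Finset.univ ψ hne
  have hMxmax : ∀ k, ψ k ≤ ψ Mx := fun k => hMx k (Finset.mem_univ k)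
  have hall : ∀ v, ψ v = ψ Mx := by
    intro v
    obtain ⟨l, hMl, hvl⟩ := hcommon Mx v
    have hψl : ψ l = ψ Mx := hstep Mx hMxmax l hMl
    have hlmax : ∀ k, ψ k ≤ ψ l := by rw [hψl]; exact hMxmax
    have : ψ v = ψ l := hstep l hlmax v (by rw [hsym]; exact hvl)
    rw [this, hψl]
  intro j k
  refine ⟨M j - M k, ?_⟩
  rw [hθψ j, hθψ k, hall j, hall k]
  push_cast
  ring
end
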